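/- arXiv:1001.4464 — 10 statements merged into one kernel-verified Lean document; each statement's English description precedes it below -/
import Mathlib

section
/- Degree principle: Let n ≥ 1 and let F ∈ ℝ[x_1,…,x_n] be a symmetric polynomial of (total) degree d ≥ 1. Then there exists x ∈ ℝⁿ with F(x) = 0 if and only if there exists y ∈ ℝⁿ with at most d distinct coordinates such that F(y) = 0. -/
/-!
A symmetric polynomial of degree at most `d` is a polynomial in `e₁, …, e_d`: the
leading-monomial induction of the fundamental theorem never raises the degree. Newton's
identities express each `e_k` through `p₁, …, p_k`, so `F(y)` only depends on the power sums
`p₁(y), …, p_d(y)`. It therefore suffices to move any `x` within its fibre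
`{y | p_k(y) = p_k(x), 1 ≤ k ≤ d}` to a point with at most `d` distinct coordinates. For
`d ≥ 2` the fibre is compact, since it fixes `p₂`. At a minimiser of `p_{d+1}` on it the
gradients of `p₁, …, p_{d+1}` are linearly dependent (Lagrange), that is, every coordinate is
a root of one nonzero polynomial `∑ c_k k X^(k-1)` of degree at most `d`. For `d = 1` the
constant vector with the same mean will do.
-/

open MvPolynomial Finset AddMonoidAlgebra

theorem Fin.sum_accumulate {n : ℕ} (t : Fin n → ℕ) :
    ∑ j, Fin.accumulate n n t j = ∑ i : Fin n, ((i : ℕ) + 1) * t i := by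
  simp only [Fin.accumulate_apply, Finset.sum_filter]
  rw [Finset.sum_comm]
  refine Finset.sum_congr rfl fun i _ => ?_
  rw [← Finset.sum_filter, Finset.sum_const, smul_eq_mul]
  simp_rw [Fin.val_fin_le, Finset.filter_ge_eq_Iic, Fin.card_Iic]

namespace MvPolynomial

variable {σ R : Type*}

theorem totalDegree_esymm_le [CommSemiring R] [Fintype σ] (k : ℕ) :
    (esymm σ R k).totalDegree ≤ k := by
  rw [esymm]
  refine (totalDegree_finsetSum _ _).trans (Finset.sup_le fun s hs => ?_)
  refine (totalDegree_finsetProd _ _).trans ?_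
  calc ∑ i ∈ s, (X i : MvPolynomial σ R).totalDegree ≤ ∑ _i ∈ s, 1 :=
        sum_le_sum fun i _ => (totalDegree_monomial_le _ _).trans (by simp)
    _ = k := by simp [(mem_powersetCard.mp hs).2]

theorem sum_ofLex_supDegree_le_totalDegree [CommSemiring R] [LinearOrder σ] [Fintype σ]
    (p : MvPolynomial σ R) : ∑ j, ofLex (p.supDegree toLex) j ≤ p.totalDegree := by
  obtain rfl | h0 := eq_or_ne p 0
  · exact (sum_eq_zero fun _ _ => rfl).trans_le (Nat.zero_le _)
  obtain ⟨a, ha, hae⟩ := exists_supDegree_mem_support toLex h0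
  rw [hae]
  simpa [Finsupp.sum_fintype] using le_totalDegree ha

section esymmAlgHomMonomial

variable [CommSemiring R] [Fintype σ] {n : ℕ} (t : Fin n →₀ ℕ) (r : R)

theorem esymmAlgHomMonomial_eq_C_mul_prod :
    esymmAlgHomMonomial σ t r = C r * ∏ i ∈ t.support, esymm σ R (i + 1) ^ t i := by
  rw [esymmAlgHomMonomial, esymmAlgHom_apply, aeval_monomial, algebraMap_eq]
  rfl

theorem totalDegree_esymmAlgHomMonomial_le :
    (esymmAlgHomMonomial σ t r).totalDegree ≤ ∑ i : Fin n, ((i : ℕ) + 1) * t i := by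
  rw [esymmAlgHomMonomial_eq_C_mul_prod]
  refine (totalDegree_mul _ _).trans ?_
  rw [totalDegree_C, zero_add]
  refine (totalDegree_finsetProd _ _).trans ?_
  calc ∑ i ∈ t.support, (esymm σ R (i + 1) ^ t i).totalDegree
      ≤ ∑ i ∈ t.support, ((i : ℕ) + 1) * t i := sum_le_sum fun i _ =>
        (totalDegree_pow _ _).trans
          (mul_comm (t i) _ ▸ Nat.mul_le_mul_left _ (totalDegree_esymm_le _))
    _ ≤ ∑ i : Fin n, ((i : ℕ) + 1) * t i := sum_le_sum_of_subset (subset_univ _)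

theorem esymmAlgHomMonomial_mem_adjoin_esymm {D : ℕ}
    (ht : ∑ i : Fin n, ((i : ℕ) + 1) * t i ≤ D) :
    esymmAlgHomMonomial σ t r ∈ Algebra.adjoin R (esymm σ R '' Set.Icc 1 D) := by
  rw [esymmAlgHomMonomial_eq_C_mul_prod, ← algebraMap_eq]
  refine Subalgebra.mul_mem _ (Subalgebra.algebraMap_mem _ r) ?_
  refine Subalgebra.prod_mem _ fun i hi => Subalgebra.pow_mem _ (Algebra.subset_adjoin ?_) _
  refine ⟨i + 1, ⟨le_add_self, ?_⟩, rfl⟩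
  calc (i : ℕ) + 1 ≤ ((i : ℕ) + 1) * t i :=
        Nat.le_mul_of_pos_right _ (Nat.pos_of_ne_zero (Finsupp.mem_support_iff.mp hi))
    _ ≤ ∑ i : Fin n, ((i : ℕ) + 1) * t i :=
        single_le_sum (f := fun i : Fin n => ((i : ℕ) + 1) * t i) (fun _ _ => Nat.zero_le _)
          (mem_univ i)
    _ ≤ D := ht

end esymmAlgHomMonomial

theorem IsSymmetric.mem_adjoin_esymm [CommRing R] {n D : ℕ} {p : MvPolynomial (Fin n) R}
    (hp : p.IsSymmetric) (hdeg : p.totalDegree ≤ D) :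
    p ∈ Algebra.adjoin R (esymm (Fin n) R '' Set.Icc 1 D) := by
  induction he : p.supDegree toLex using WellFoundedLT.induction generalizing p with | _ u ih
  subst he
  obtain rfl | h0 := eq_or_ne p 0
  · exact zero_mem _
  set t := Finsupp.equivFunOnFinite.symm (Fin.invAccumulate n n ↑(ofLex (p.supDegree toLex)))
  have hacc : Fin.accumulate n n t = ofLex (p.supDegree toLex) :=
    Fin.accumulate_invAccumulate le_rfl hp.antitone_supDegree
  have hweight : ∑ i : Fin n, ((i : ℕ) + 1) * t i ≤ D := by
    rw [← Fin.sum_accumulate, hacc]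
    exact (sum_ofLex_supDegree_le_totalDegree p).trans hdeg
  have hlc : p.leadingCoeff toLex ≠ 0 := by rwa [Ne, leadingCoeff_eq_zero toLex.injective]
  set E := esymmAlgHomMonomial (Fin n) t (p.leadingCoeff toLex)
  have hE : E ∈ Algebra.adjoin R (esymm (Fin n) R '' Set.Icc 1 D) :=
    esymmAlgHomMonomial_mem_adjoin_esymm t _ hweight
  obtain hpE | hne := eq_or_ne p E
  · rwa [hpE]
  have hsupDegree : E.supDegree toLex = p.supDegree toLex := by
    rw [← ofLex_inj, DFunLike.ext'_iff, supDegree_esymmAlgHomMonomial hlc t le_rfl, hacc]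
  have hlt : (p - E).supDegree toLex < p.supDegree toLex :=
    (supDegree_sub_lt_of_leadingCoeff_eq toLex.injective hsupDegree.symm
      (leadingCoeff_esymmAlgHomMonomial t le_rfl).symm).resolve_right hne
  have hdegE : (p - E).totalDegree ≤ D := (totalDegree_sub _ _).trans
    (max_le hdeg ((totalDegree_esymmAlgHomMonomial_le t _).trans hweight))
  rw [← sub_add_cancel p E]
  exact add_mem (ih _ hlt (hp.sub (isSymmetric_esymmAlgHomMonomial _ _)) hdegE rfl) hE

section CharZero

variable {K : Type*} [Field K] [CharZero K]

theorem esymm_mem_adjoin_psum [Fintype σ] {k D : ℕ} (hk : k ≤ D) :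
    esymm σ K k ∈ Algebra.adjoin K (psum σ K '' Set.Icc 1 D) := by
  induction k using Nat.strong_induction_on with | _ k ih
  obtain rfl | hk0 := k.eq_zero_or_pos
  · simpa only [esymm_zero] using one_mem _
  have hnewton :
      (k : MvPolynomial σ K) * esymm σ K k ∈ Algebra.adjoin K (psum σ K '' Set.Icc 1 D) := by
    classical
    rw [mul_esymm_eq_sum]
    refine mul_mem (pow_mem (neg_mem (one_mem _)) _) (sum_mem fun a ha => ?_)
    rw [mem_filter, HasAntidiagonal.mem_antidiagonal] at ha
    refine mul_mem (mul_mem (pow_mem (neg_mem (one_mem _)) _) (ih _ ha.2 (by omega))) ?_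
    exact Algebra.subset_adjoin ⟨a.2, ⟨by omega, by omega⟩, rfl⟩
  have hkK : (k : K) ≠ 0 := Nat.cast_ne_zero.mpr hk0.ne'
  rw [← nsmul_eq_mul, ← Nat.cast_smul_eq_nsmul K] at hnewton
  simpa [smul_smul, hkK] using Subalgebra.smul_mem _ hnewton (k : K)⁻¹

theorem IsSymmetric.mem_adjoin_psum {n D : ℕ} {p : MvPolynomial (Fin n) K}
    (hp : p.IsSymmetric) (hdeg : p.totalDegree ≤ D) :
    p ∈ Algebra.adjoin K (psum (Fin n) K '' Set.Icc 1 D) :=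
  Algebra.adjoin_le (by rintro _ ⟨k, hk, rfl⟩; exact esymm_mem_adjoin_psum hk.2)
    (hp.mem_adjoin_esymm hdeg)

theorem IsSymmetric.eval_eq_of_sum_pow_eq {n D : ℕ} {p : MvPolynomial (Fin n) K}
    (hp : p.IsSymmetric) (hdeg : p.totalDegree ≤ D) {y z : Fin n → K}
    (h : ∀ k ∈ Set.Icc 1 D, ∑ j, y j ^ k = ∑ j, z j ^ k) : eval y p = eval z p := by
  have hgen : (psum (Fin n) K '' Set.Icc 1 D).EqOn (aeval y) (aeval z) := by
    rintro _ ⟨k, hk, rfl⟩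
    simpa [psum] using h k hk
  simpa [coe_aeval_eq_eval] using
    AlgHom.adjoin_le_equalizer _ _ hgen (hp.mem_adjoin_psum hdeg)

end CharZero

end MvPolynomial

theorem eq_zero_of_forall_mem_sum_mul_pow_eq_zero {R : Type*} [CommRing R] [IsDomain R]
    {m : ℕ} {s : Finset R} (hs : m ≤ #s) {v : Fin m → R} (h : ∀ x ∈ s, ∑ i, v i * x ^ (i : ℕ) = 0) :
    v = 0 := by
  let f : Fin m → R := fun i => s.equivFin.symm (Fin.castLE hs i)
  have hf : f.Injective :=
    Subtype.val_injective.comp (s.equivFin.symm.injective.comp (Fin.castLE_injective hs))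
  exact Matrix.eq_zero_of_forall_index_sum_mul_pow_eq_zero hf fun j => h _ (s.equivFin.symm _).2

section PowerSums

variable {ι : Type*} [Fintype ι]

theorem hasStrictFDerivAt_sum_pow_succ (k : ℕ) (a : ι → ℝ) :
    HasStrictFDerivAt (fun y : ι → ℝ => ∑ j, y j ^ (k + 1))
      (∑ j, (((k : ℝ) + 1) * a j ^ k) • (ContinuousLinearMap.proj j : (ι → ℝ) →L[ℝ] ℝ)) a :=
  HasStrictFDerivAt.fun_sum fun j _ => by
    have hproj : HasStrictFDerivAt (fun y : ι → ℝ => y j)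
        (ContinuousLinearMap.proj j : (ι → ℝ) →L[ℝ] ℝ) a :=
      (ContinuousLinearMap.proj (R := ℝ) (φ := fun _ : ι => ℝ) j).hasStrictFDerivAt
    exact ((hasStrictDerivAt_pow (k + 1) (a j)).comp_hasStrictFDerivAt a hproj).congr_fderiv
      (by rw [Nat.add_sub_cancel, Nat.cast_add_one])

theorem linearIndependent_fderiv_sum_pow_succ {m : ℕ} {y : ι → ℝ}
    (hm : m ≤ #(univ.image y)) :
    LinearIndependent ℝ fun k : Fin m =>
      ∑ j, (((k : ℝ) + 1) * y j ^ (k : ℕ)) • (ContinuousLinearMap.proj j : (ι → ℝ) →L[ℝ] ℝ) := by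
  classical
  rw [Fintype.linearIndependent_iff]
  intro g hg k
  have hroots : (fun k : Fin m => g k * ((k : ℝ) + 1)) = 0 := by
    refine eq_zero_of_forall_mem_sum_mul_pow_eq_zero hm fun x hx => ?_
    obtain ⟨j, -, rfl⟩ := mem_image.mp hx
    have := congrArg (fun L => L (Pi.single j 1)) hg
    simpa [Finset.smul_sum, Pi.single_apply, mul_assoc] using this
  simpa [Nat.cast_add_one_ne_zero] using congrFun hroots k

theorem card_image_le_of_isLocalExtrOn {d : ℕ} {y₀ : ι → ℝ}
    (h : IsLocalExtrOn (fun y : ι → ℝ => ∑ j, y j ^ (d + 1))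
      {y | ∀ i : Fin d, ∑ j, y j ^ ((i : ℕ) + 1) = ∑ j, y₀ j ^ ((i : ℕ) + 1)} y₀) :
    #(univ.image y₀) ≤ d := by
  by_contra! hcard
  refine h.linear_dependent_of_hasStrictFDerivAt (fun i => hasStrictFDerivAt_sum_pow_succ _ y₀)
    (hasStrictFDerivAt_sum_pow_succ d y₀) ?_
  refine (linearIndependent_equiv' finSuccEquivLast ?_).mp
    (linearIndependent_fderiv_sum_pow_succ hcard)
  funext k
  cases k using Fin.lastCases <;> simp

theorem isBounded_setOf_sum_sq_le (s : ℝ) :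
    Bornology.IsBounded {y : ι → ℝ | ∑ j, y j ^ 2 ≤ s} := by
  refine (Metric.isBounded_closedBall (x := 0) (r := √s)).subset fun y hy => ?_
  rw [mem_closedBall_zero_iff, pi_norm_le_iff_of_nonneg (Real.sqrt_nonneg _)]
  exact fun j => Real.abs_le_sqrt
    ((single_le_sum (f := fun j => y j ^ 2) (fun _ _ => sq_nonneg _) (mem_univ j)).trans hy)

theorem exists_card_image_le_one_sum_eq (x : ι → ℝ) :
    ∃ y : ι → ℝ, #(univ.image y) ≤ 1 ∧ ∑ j, y j = ∑ j, x j := by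
  refine ⟨fun _ => (∑ j, x j) / Fintype.card ι, card_le_one.mpr (by simp), ?_⟩
  rcases isEmpty_or_nonempty ι with _ | _ <;> simp [mul_div_cancel₀]

theorem exists_card_image_le_sum_pow_eq_of_two_le {d : ℕ} (hd : 2 ≤ d) (x : ι → ℝ) :
    ∃ y : ι → ℝ, #(univ.image y) ≤ d ∧
      ∀ i : Fin d, ∑ j, y j ^ ((i : ℕ) + 1) = ∑ j, x j ^ ((i : ℕ) + 1) := by
  set K := {y : ι → ℝ | ∀ i : Fin d, ∑ j, y j ^ ((i : ℕ) + 1) = ∑ j, x j ^ ((i : ℕ) + 1)}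
  have hK : IsCompact K := by
    refine Metric.isCompact_of_isClosed_isBounded ?_
      ((isBounded_setOf_sum_sq_le _).subset fun y hy => (hy ⟨1, hd⟩).le)
    simp only [K, Set.ofPred_forall]
    exact isClosed_iInter fun i => isClosed_eq (by fun_prop) continuous_const
  obtain ⟨y₀, hy₀, hmin⟩ := hK.exists_isMinOn ⟨x, fun _ => rfl⟩
    (by fun_prop : Continuous fun y : ι → ℝ => ∑ j, y j ^ (d + 1)).continuousOn
  have hfiber :
      {y : ι → ℝ | ∀ i : Fin d, ∑ j, y j ^ ((i : ℕ) + 1) = ∑ j, y₀ j ^ ((i : ℕ) + 1)} = K :=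
    Set.ext fun y => forall_congr' fun i => by rw [hy₀ i]
  refine ⟨y₀, card_image_le_of_isLocalExtrOn ?_, hy₀⟩
  rw [hfiber]
  exact hmin.isExtr.localize

theorem exists_card_image_le_sum_pow_eq {d : ℕ} (hd : 1 ≤ d) (x : ι → ℝ) :
    ∃ y : ι → ℝ, #(univ.image y) ≤ d ∧ ∀ k ∈ Set.Icc 1 d, ∑ j, y j ^ k = ∑ j, x j ^ k := by
  rcases hd.eq_or_lt with rfl | hd
  · obtain ⟨y, hcard, hsum⟩ := exists_card_image_le_one_sum_eq x
    refine ⟨y, hcard, fun k hk => ?_⟩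
    obtain rfl : k = 1 := le_antisymm hk.2 hk.1
    simpa using hsum
  · obtain ⟨y, hcard, hsum⟩ := exists_card_image_le_sum_pow_eq_of_two_le hd x
    refine ⟨y, hcard, fun k ⟨hk1, hkd⟩ => ?_⟩
    simpa [Nat.sub_add_cancel hk1] using hsum ⟨k - 1, by omega⟩

end PowerSums

theorem degree_principle_general (n d : ℕ) (hd : 1 ≤ d)
    (F : MvPolynomial (Fin n) ℝ) (hF : MvPolynomial.IsSymmetric F)
    (hdeg : F.totalDegree = d) :
    (∃ x : Fin n → ℝ, MvPolynomial.eval x F = 0) ↔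
      (∃ y : Fin n → ℝ, (Finset.univ.image y).card ≤ d ∧ MvPolynomial.eval y F = 0) := by
  refine ⟨fun ⟨x, hx⟩ => ?_, fun ⟨y, _, hy⟩ => ⟨y, hy⟩⟩
  obtain ⟨y, hcard, hpow⟩ := exists_card_image_le_sum_pow_eq hd x
  exact ⟨y, hcard, (hF.eval_eq_of_sum_pow_eq hdeg.le hpow).trans hx⟩

/-- **Degree principle.** A symmetric real polynomial `F` of total degree `d ≥ 1` in `n`
variables has a real zero iff it has a real zero with at most `d` distinct coordinates. -/
theorem degree_principle (n d : ℕ) (hn : 1 ≤ n) (hd : 1 ≤ d)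
    (F : MvPolynomial (Fin n) ℝ) (hF : MvPolynomial.IsSymmetric F)
    (hdeg : F.totalDegree = d) :
    (∃ x : Fin n → ℝ, MvPolynomial.eval x F = 0) ↔
      (∃ y : Fin n → ℝ, (Finset.univ.image y).card ≤ d ∧ MvPolynomial.eval y F = 0) :=
  degree_principle_general n d hd F hF hdeg
end

section
/- Half degree principle on the nonnegative orthant: Let n ≥ 1 and let F ∈ ℝ[x_1,…,x_n] be a symmetric polynomial of (total) degree d ≥ 1, and set k := max{2, ⌊d/2⌋}. Then F(x) ≥ 0 for all x ∈ ℝⁿ with all coordinates nonnegative if and only if F(y) ≥ 0 for all y ∈ ℝⁿ with all coordinates nonnegative whose nonzero coordinates take at most k distinct values. -/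
/-!
Write `F = G(e₁, …, eₙ)`. Giving `eᵢ` the weight `i`, `G` has weighted degree at most
`d ≤ 2k + 1`, so it is affine in `e_{k+1}, …, eₙ` once `e₁, …, e_k` are fixed.

Given `x ≥ 0`, take the compact set of `y ≥ 0` with `eᵢ(y) = eᵢ(x)` for `i ≤ k`, and choose among
the minimisers of `F` on it one, `z`, that maximises `∑ eᵢ(y)²`. Suppose `z` had more than `k`
distinct nonzero coordinates, and let `S` hold one index for each of them. Adding
`±c · ∏_{j ∉ S} (X - zⱼ)` to `∏ⱼ (X - zⱼ)` keeps all roots real and nonnegative for small `c`,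
because the roots indexed by `S` are simple and positive. It leaves `e₁, …, e_k` unchanged,
because the added polynomial has degree `n - #S < n - k`, and it moves `(e_{k+1}, …, eₙ)` by `±w`
with `w ≠ 0`. On average over the two new points `F` keeps its value while `∑ eᵢ²` grows,
contradicting the choice of `z`. Hence `0 ≤ F(z) ≤ F(x)`.
-/

open Finset Filter Topology

namespace MvPolynomial

theorem isHomogeneous_esymm (σ R : Type*) [Fintype σ] [CommSemiring R] (l : ℕ) :
    (esymm σ R l).IsHomogeneous l :=
  IsHomogeneous.sum _ _ _ fun t ht => by
    simpa [(mem_powersetCard.1 ht).2] using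
      IsHomogeneous.prod t (fun i => X i) (fun _ => 1) fun i _ => isHomogeneous_X R i

theorem isHomogeneous_aeval_monomial {σ τ R : Type*} [CommSemiring R] {w : σ → ℕ}
    {φ : σ → MvPolynomial τ R} (hφ : ∀ i, (φ i).IsHomogeneous (w i)) (t : σ →₀ ℕ) (a : R) :
    (aeval φ (monomial t a)).IsHomogeneous (Finsupp.weight w t) := by
  rw [aeval_monomial, Finsupp.weight_apply, Finsupp.sum, Finsupp.prod, algebraMap_eq]
  exact (IsHomogeneous.prod _ _ _ fun i _ => by simpa [mul_comm] using (hφ i).pow (t i)).C_mul a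

theorem homogeneousComponent_aeval {σ τ R : Type*} [CommSemiring R] {w : σ → ℕ}
    {φ : σ → MvPolynomial τ R} (hφ : ∀ i, (φ i).IsHomogeneous (w i)) (j : ℕ)
    (G : MvPolynomial σ R) :
    homogeneousComponent j (aeval φ G) = aeval φ (weightedHomogeneousComponent w j G) := by
  classical
  induction G using MvPolynomial.induction_on' with
  | monomial t a =>
    rw [homogeneousComponent_of_mem (isHomogeneous_aeval_monomial hφ t a),
      weightedHomogeneousComponent_of_mem (isWeightedHomogeneous_monomial w t a rfl)]
    split_ifs <;> simp
  | add p q hp hq => simp only [map_add, hp, hq]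

theorem weight_le_totalDegree_esymmAlgHom {n : ℕ} {R : Type*} [CommRing R]
    {G : MvPolynomial (Fin n) R} {t : Fin n →₀ ℕ} (ht : t ∈ G.support) :
    Finsupp.weight (fun i : Fin n => i.1 + 1) t ≤
      (esymmAlgHom (Fin n) R n G : MvPolynomial (Fin n) R).totalDegree := by
  classical
  by_contra! hlt
  have hcomp : weightedHomogeneousComponent (fun i : Fin n => i.1 + 1)
      (Finsupp.weight (fun i : Fin n => i.1 + 1) t) G = 0 := by
    refine (injective_iff_map_eq_zero _).1 (esymmAlgHom_fin_injective R le_rfl) _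
      (Subtype.ext ?_)
    rw [esymmAlgHom_apply, ← homogeneousComponent_aeval (fun i => isHomogeneous_esymm _ _ _),
      ← esymmAlgHom_apply, homogeneousComponent_eq_zero _ _ hlt]
    rfl
  have := congrArg (coeff t) hcomp
  rw [coeff_weightedHomogeneousComponent, if_pos rfl, coeff_zero] at this
  exact mem_support_iff.1 ht this

theorem sum_filter_le_one_of_weight_le {n k : ℕ} {t : Fin n →₀ ℕ}
    (ht : Finsupp.weight (fun i : Fin n => i.1 + 1) t ≤ 2 * k + 1) :
    ∑ i with k ≤ i.1, t i ≤ 1 := by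
  have : (k + 1) * ∑ i with k ≤ i.1, t i ≤ Finsupp.weight (fun i : Fin n => i.1 + 1) t := by
    rw [Finsupp.weight_apply, Finsupp.sum_fintype _ _ (by simp), Finset.mul_sum]
    calc ∑ i with k ≤ i.1, (k + 1) * t i
        ≤ ∑ i with k ≤ i.1, t i • (i.1 + 1) := Finset.sum_le_sum fun i hi => by
          rw [smul_eq_mul, mul_comm]
          gcongr
          exact (mem_filter.1 hi).2
      _ ≤ ∑ i, t i • (i.1 + 1) := Finset.sum_le_sum_of_subset (filter_subset _ _)
  nlinarith

theorem prod_pow_add_add_prod_pow_sub {σ R : Type*} [Fintype σ] [CommRing R] {S : Finset σ}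
    {t : σ → ℕ} (ht : ∑ i ∈ S, t i ≤ 1) {v w : σ → R} (hw : ∀ i ∉ S, w i = 0) :
    ∏ i, (v i + w i) ^ t i + ∏ i, (v i - w i) ^ t i = 2 * ∏ i, v i ^ t i := by
  classical
  have hfix : ∀ i, (t i = 0 ∨ i ∉ S) →
      (v i + w i) ^ t i = v i ^ t i ∧ (v i - w i) ^ t i = v i ^ t i := by
    rintro i (hi | hi)
    · simp [hi]
    · simp [hw i hi]
  by_cases hS : ∃ i₀ ∈ S, t i₀ ≠ 0
  · obtain ⟨i₀, hi₀S, hi₀⟩ := hS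
    have hti₀ : t i₀ = 1 := by
      have := Finset.single_le_sum (fun i _ => Nat.zero_le (t i)) hi₀S
      omega
    have hrest : ∀ i ≠ i₀, t i = 0 ∨ i ∉ S := by
      intro i hi
      by_cases hiS : i ∈ S
      · have := Finset.add_le_sum (fun i _ => Nat.zero_le (t i)) hiS hi₀S hi
        omega
      · exact Or.inr hiS
    rw [← Finset.mul_prod_erase _ _ (mem_univ i₀), ← Finset.mul_prod_erase _ _ (mem_univ i₀),
      ← Finset.mul_prod_erase _ (fun i => v i ^ t i) (mem_univ i₀),
      Finset.prod_congr rfl fun i hi => (hfix i (hrest i (ne_of_mem_erase hi))).1,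
      Finset.prod_congr rfl fun i hi => (hfix i (hrest i (ne_of_mem_erase hi))).2, hti₀]
    ring
  · push Not at hS
    have hall : ∀ i, t i = 0 ∨ i ∉ S := fun i => (em (i ∈ S)).imp_left (hS i)
    rw [Finset.prod_congr rfl fun i _ => (hfix i (hall i)).1,
      Finset.prod_congr rfl fun i _ => (hfix i (hall i)).2]
    ring

theorem eval_add_add_eval_sub {σ R : Type*} [Fintype σ] [CommRing R]
    {G : MvPolynomial σ R} {S : Finset σ} (hG : ∀ t ∈ G.support, ∑ i ∈ S, t i ≤ 1)
    {v w : σ → R} (hw : ∀ i ∉ S, w i = 0) :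
    eval (v + w) G + eval (v - w) G = 2 * eval v G := by
  simp only [eval_eq', Pi.add_apply, Pi.sub_apply, Finset.mul_sum, ← sum_add_distrib]
  exact sum_congr rfl fun t ht => by
    rw [← mul_add, prod_pow_add_add_prod_pow_sub (hG t ht) hw, mul_left_comm]

/-- Indexed like `esymmAlgHom (Fin n) R n`, which sends `X i` to `esymm (i + 1)`. -/
noncomputable def esymmVec {n : ℕ} {R : Type*} [CommSemiring R] (x : Fin n → R) : Fin n → R :=
  fun i => eval x (esymm (Fin n) R (i + 1))

theorem continuous_esymmVec {n : ℕ} {R : Type*} [CommSemiring R] [TopologicalSpace R]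
    [IsTopologicalSemiring R] : Continuous (esymmVec : (Fin n → R) → Fin n → R) :=
  continuous_pi fun _ => continuous_eval _

theorem eval_esymmAlgHom {n : ℕ} {R : Type*} [CommRing R] (G : MvPolynomial (Fin n) R)
    (x : Fin n → R) :
    eval x (esymmAlgHom (Fin n) R n G : MvPolynomial (Fin n) R) = eval (esymmVec x) G := by
  rw [esymmAlgHom_apply, aeval_eq_bind₁]
  exact aeval_bind₁ x _ G

def esymmFiber {n : ℕ} (k : ℕ) (x : Fin n → ℝ) : Set (Fin n → ℝ) :=
  {y | (∀ i, 0 ≤ y i) ∧ ∀ i : Fin n, i.1 < k → esymmVec y i = esymmVec x i}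

theorem isCompact_esymmFiber {n k : ℕ} (hk : 1 ≤ k) (x : Fin n → ℝ) :
    IsCompact (esymmFiber k x) := by
  refine (isCompact_Icc (a := 0) (b := fun _ => ∑ j, x j)).of_isClosed_subset ?_ ?_
  · simp only [esymmFiber, Set.ofPred_and, Set.ofPred_forall]
    exact (isClosed_iInter fun i => isClosed_le continuous_const (continuous_apply i)).inter
      (isClosed_iInter fun i => isClosed_iInter fun _ =>
        isClosed_eq ((continuous_apply i).comp continuous_esymmVec) continuous_const)
  · rintro y ⟨hy0, hy⟩
    refine ⟨hy0, fun j => ?_⟩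
    have hsum : ∑ i, y i = ∑ i, x i := by
      simpa [esymmVec] using hy ⟨0, j.pos⟩ hk
    exact hsum ▸ single_le_sum (fun i _ => hy0 i) (mem_univ j)

end MvPolynomial

section RealRoots

open Polynomial

theorem exists_mem_Ioo_eq_zero_of_mul_neg {α : Type*} [ConditionallyCompleteLinearOrder α]
    [DenselyOrdered α] [TopologicalSpace α] [OrderTopology α] {a b : α} (hab : a ≤ b)
    {f : α → ℝ} (hf : ContinuousOn f (Set.Icc a b)) (h : f a * f b < 0) :
    ∃ x ∈ Set.Ioo a b, f x = 0 := by
  rcases mul_neg_iff.1 h with ⟨ha, hb⟩ | ⟨ha, hb⟩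
  · exact intermediate_value_Ioo' hab hf ⟨hb, ha⟩
  · exact intermediate_value_Ioo hab hf ⟨ha, hb⟩

theorem exists_pos_forall_lt_and_two_mul_lt_abs_sub {ι : Type*} {s : Finset ι} {t : ι → ℝ}
    (ht : Set.InjOn t s) (htpos : ∀ i ∈ s, 0 < t i) :
    ∃ ρ > 0, (∀ i ∈ s, ρ < t i) ∧ ∀ i ∈ s, ∀ j ∈ s, i ≠ j → 2 * ρ < |t i - t j| := by
  have hsep : ∀ i ∈ s, ∀ j ∈ s, ∀ᶠ ρ in 𝓝 (0 : ℝ), i ≠ j → 2 * ρ < |t i - t j| :=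
    fun i hi j hj => by
      by_cases hij : i = j
      · simp [hij]
      · have : 0 < |t i - t j| / 2 := half_pos (abs_pos.2 (sub_ne_zero.2 (ht.ne hi hj hij)))
        filter_upwards [eventually_lt_nhds this] with ρ hρ _
        linarith
  have hev := (eventually_all_finset s |>.2 fun i hi => eventually_lt_nhds (htpos i hi)).and
    (eventually_all_finset s |>.2 fun i hi => eventually_all_finset s |>.2 (hsep i hi))
  obtain ⟨ρ, ⟨hρt, hρsep⟩, hρ⟩ := ((hev.filter_mono nhdsWithin_le_nhds).and
    (self_mem_nhdsWithin : ∀ᶠ ρ in 𝓝[>] (0 : ℝ), 0 < ρ)).exists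
  exact ⟨ρ, hρ, hρt, hρsep⟩

theorem eval_mul_eval_neg_of_isolated {ι : Type*} {s : Finset ι} {t : ι → ℝ} {i : ι} (hi : i ∈ s)
    {ρ : ℝ} (hρ : 0 < ρ) (hsep : ∀ j ∈ s, j ≠ i → 2 * ρ < |t i - t j|) :
    (∏ j ∈ s, (X - C (t j))).eval (t i - ρ) * (∏ j ∈ s, (X - C (t j))).eval (t i + ρ) < 0 := by
  classical
  simp only [eval_prod, eval_sub, eval_X, eval_C]
  rw [← prod_mul_distrib, ← mul_prod_erase _ _ hi]
  refine mul_neg_of_neg_of_pos (by nlinarith) (prod_pos fun j hj => ?_)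
  have h := hsep j (mem_of_mem_erase hj) (ne_of_mem_erase hj)
  nlinarith [sq_abs (t i - t j), abs_nonneg (t i - t j)]

theorem eq_prod_X_sub_C_of_monic {R : Type*} [Field R] {ι : Type*} {s : Finset ι} {r : ι → R}
    (hr : Set.InjOn r s) {p : R[X]} (hp : p.Monic) (hdeg : p.natDegree ≤ #s)
    (hroot : ∀ i ∈ s, p.IsRoot (r i)) : p = ∏ i ∈ s, (X - C (r i)) := by
  refine eq_of_monic_of_dvd_of_natDegree_le (monic_prod_of_monic _ _ fun i _ => monic_X_sub_C _)
    hp (prod_dvd_of_coprime (fun i hi j hj hij => ?_) fun i hi => dvd_iff_isRoot.2 (hroot i hi))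
    (by rwa [natDegree_finsetProd_X_sub_C_eq_card])
  exact isCoprime_X_sub_C_of_isUnit_sub (sub_ne_zero.2 (hr.ne hi hj hij)).isUnit

theorem eventually_exists_pos_prod_X_sub_C_eq_add_C {ι : Type*} {s : Finset ι} (hs : s.Nonempty)
    {t : ι → ℝ} (ht : Set.InjOn t s) (htpos : ∀ i ∈ s, 0 < t i) :
    ∀ᶠ c in 𝓝 0, ∃ r : ι → ℝ, (∀ i ∈ s, 0 < r i) ∧
      ∏ i ∈ s, (X - C (r i)) = ∏ i ∈ s, (X - C (t i)) + C c := by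
  classical
  set E := ∏ i ∈ s, (X - C (t i))
  obtain ⟨ρ, hρ, hρt, hρsep⟩ := exists_pos_forall_lt_and_two_mul_lt_abs_sub ht htpos
  have hsign : ∀ i ∈ s, E.eval (t i - ρ) * E.eval (t i + ρ) < 0 := fun i hi =>
    eval_mul_eval_neg_of_isolated hi hρ fun j hj hji => hρsep i hi j hj (Ne.symm hji)
  have hsign' : ∀ᶠ c in 𝓝 (0 : ℝ), ∀ i ∈ s,
      (E.eval (t i - ρ) + c) * (E.eval (t i + ρ) + c) < 0 :=
    eventually_all_finset s |>.2 fun i hi => by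
      have hcont : Continuous fun c : ℝ => (E.eval (t i - ρ) + c) * (E.eval (t i + ρ) + c) := by
        fun_prop
      exact hcont.continuousAt.eventually_lt continuousAt_const (by simpa using hsign i hi)
  filter_upwards [hsign'] with c hc
  have hroot : ∀ i ∈ s, ∃ x ∈ Set.Ioo (t i - ρ) (t i + ρ), (E + C c).eval x = 0 := fun i hi =>
    exists_mem_Ioo_eq_zero_of_mul_neg (by linarith) (E + C c).continuous.continuousOn
      (by simpa using hc i hi)
  choose! r hr hroot using hroot
  have hmonic : (E + C c).Monic := by
    have hE : E.Monic := monic_prod_of_monic _ _ fun i _ => monic_X_sub_C _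
    refine hE.add_of_left (degree_C_le.trans_lt ?_)
    rw [degree_eq_natDegree hE.ne_zero, natDegree_finsetProd_X_sub_C_eq_card]
    exact_mod_cast hs.card_pos
  refine ⟨r, fun i hi => by linarith [(hr i hi).1, hρt i hi], ?_⟩
  refine (eq_prod_X_sub_C_of_monic (fun i hi j hj hij => ?_) hmonic ?_ hroot).symm
  · by_contra hne
    obtain ⟨⟨hi₁, hi₂⟩, ⟨hj₁, hj₂⟩⟩ := And.intro (hr i hi) (hr j hj)
    exact (hρsep i hi j hj hne).not_ge (abs_sub_le_iff.2 ⟨by linarith, by linarith⟩)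
  · rw [natDegree_add_C, natDegree_finsetProd_X_sub_C_eq_card]

end RealRoots

section ElementarySymmetric

open Polynomial
open MvPolynomial (esymm esymmVec)

theorem eval_esymm_eq_coeff_prod_X_sub_C {σ R : Type*} [Fintype σ] [CommRing R]
    (x : σ → R) {l : ℕ} (hl : l ≤ Fintype.card σ) :
    MvPolynomial.eval x (esymm σ R l) =
      (-1) ^ l * (∏ i, (X - C (x i))).coeff (Fintype.card σ - l) := by
  have h := (univ.val.map x).prod_X_sub_C_coeff (k := Fintype.card σ - l) (by simp)
  simp only [Multiset.map_map, Function.comp_def, Multiset.card_map, card_val,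
    ← Finset.prod_eq_multiset_prod, card_univ, Nat.sub_sub_self hl] at h
  rw [h, ← mul_assoc, ← pow_add, Even.neg_one_pow ⟨l, rfl⟩, one_mul,
    ← MvPolynomial.aeval_esymm_eq_multiset_esymm σ R, MvPolynomial.aeval_eq_eval]

theorem prod_X_sub_C_piecewise {ι R : Type*} [Fintype ι] [DecidableEq ι] [CommRing R]
    (S : Finset ι) (r z : ι → R) :
    ∏ j, (X - C (S.piecewise r z j)) =
      (∏ j ∈ S, (X - C (r j))) * ∏ j ∈ Sᶜ, (X - C (z j)) := by
  rw [← prod_mul_prod_compl S]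
  congr 1 <;> refine prod_congr rfl fun j hj => ?_
  · rw [S.piecewise_eq_of_mem _ _ hj]
  · rw [S.piecewise_eq_of_notMem _ _ (mem_compl.1 hj)]

theorem esymmVec_piecewise {n : ℕ} {R : Type*} [CommRing R] {S : Finset (Fin n)}
    {r z : Fin n → R} {c : R} (h : ∏ j ∈ S, (X - C (r j)) = ∏ j ∈ S, (X - C (z j)) + C c) :
    esymmVec (S.piecewise r z) = esymmVec z + c • fun i : Fin n =>
      (-1) ^ (i.1 + 1) * (∏ j ∈ Sᶜ, (X - C (z j))).coeff (n - (i.1 + 1)) := by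
  funext i
  have hi : i.1 + 1 ≤ Fintype.card (Fin n) := by simp [Nat.succ_le_of_lt i.2]
  simp only [esymmVec, Pi.add_apply, Pi.smul_apply, smul_eq_mul]
  rw [eval_esymm_eq_coeff_prod_X_sub_C _ hi, eval_esymm_eq_coeff_prod_X_sub_C _ hi,
    prod_X_sub_C_piecewise, h, add_mul, prod_mul_prod_compl S fun j => X - C (z j), coeff_add,
    coeff_C_mul, Fintype.card_fin]
  ring

theorem exists_esymmVec_eq_add_and_sub {n k : ℕ} {z : Fin n → ℝ} (hz : ∀ i, 0 ≤ z i)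
    (hk : k < ((univ.image z).filter (· ≠ 0)).card) :
    ∃ w : Fin n → ℝ, w ≠ 0 ∧ (∀ i : Fin n, i.1 < k → w i = 0) ∧
      (∃ x, (∀ i, 0 ≤ x i) ∧ esymmVec x = esymmVec z + w) ∧
      ∃ x, (∀ i, 0 ≤ x i) ∧ esymmVec x = esymmVec z - w := by
  classical
  obtain ⟨S, hSz, hSinj, hSimg⟩ := exists_subset_injOn_image_eq_of_surjOn {j | z j ≠ 0}
    ((univ.image z).filter (· ≠ 0)) fun v hv => by
      obtain ⟨hv, hv0⟩ := mem_filter.1 hv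
      obtain ⟨j, -, rfl⟩ := mem_image.1 hv
      exact ⟨j, hv0, rfl⟩
  have hSpos : ∀ j ∈ S, 0 < z j := fun j hj => (hz j).lt_of_ne (Ne.symm (hSz hj))
  have hkS : k < #S := by rwa [← hSimg, card_image_of_injOn hSinj] at hk
  have hSn : #S ≤ n := (card_le_univ S).trans_eq (Fintype.card_fin n)
  set Q := ∏ j ∈ Sᶜ, (X - C (z j))
  have hQ : Q.Monic := monic_prod_of_monic _ _ fun j _ => monic_X_sub_C _
  have hQdeg : Q.natDegree = n - #S := by simp [Q, card_compl]
  have hev := eventually_exists_pos_prod_X_sub_C_eq_add_C (card_pos.1 (by omega)) hSinj hSpos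
  obtain ⟨c, ⟨⟨rp, hrp, hrpS⟩, ⟨rm, hrm, hrmS⟩⟩, hc⟩ :=
    (((hev.and ((continuous_neg.tendsto' 0 0 neg_zero).eventually hev)).filter_mono
      nhdsWithin_le_nhds).and (eventually_mem_nhdsWithin (s := {0}ᶜ) (a := (0 : ℝ)))).exists
  have hnonneg : ∀ r : Fin n → ℝ, (∀ j ∈ S, 0 < r j) → ∀ i, 0 ≤ S.piecewise r z i :=
    fun r hr i => by
      by_cases hi : i ∈ S
      · simpa [hi] using (hr i hi).le
      · simp [hi, hz i]
  refine ⟨c • fun i : Fin n => (-1) ^ (i.1 + 1) * Q.coeff (n - (i.1 + 1)), ?_, ?_,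
    ⟨_, hnonneg rp hrp, esymmVec_piecewise hrpS⟩,
    ⟨_, hnonneg rm hrm, by rw [esymmVec_piecewise hrmS, neg_smul, ← sub_eq_add_neg]⟩⟩
  · intro h0
    refine hc ?_
    simpa [show n - (#S - 1 + 1) = Q.natDegree by omega, hQ.coeff_natDegree] using
      congrFun h0 ⟨#S - 1, by omega⟩
  · intro i hi
    simp [coeff_eq_zero_of_natDegree_lt (show Q.natDegree < n - (i.1 + 1) by omega)]

end ElementarySymmetric

theorem IsCompact.exists_isMinOn_and_of_midpoint {X : Type*} [TopologicalSpace X] {K : Set X}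
    (hK : IsCompact K) (hne : K.Nonempty) {f g : X → ℝ} (hf : Continuous f)
    (hg : ContinuousOn g K) {p : X → Prop}
    (h : ∀ z ∈ K, ¬ p z → ∃ x ∈ K, ∃ y ∈ K, f x + f y ≤ 2 * f z ∧ 2 * g z < g x + g y) :
    ∃ z ∈ K, IsMinOn f K z ∧ p z := by
  obtain ⟨z₀, hz₀, hmin₀⟩ := hK.exists_isMinOn hne hf.continuousOn
  have hL : IsCompact (K ∩ f ⁻¹' {f z₀}) := hK.inter_right (isClosed_singleton.preimage hf)
  obtain ⟨z, ⟨hzK, hz : f z = f z₀⟩, hmax⟩ :=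
    hL.exists_isMaxOn ⟨z₀, hz₀, rfl⟩ (hg.mono Set.inter_subset_left)
  rw [isMinOn_iff] at hmin₀
  rw [isMaxOn_iff] at hmax
  refine ⟨z, hzK, isMinOn_iff.2 fun x hx => hz ▸ hmin₀ x hx, by_contra fun hp => ?_⟩
  obtain ⟨x, hx, y, hy, hfxy, hgxy⟩ := h z hzK hp
  have hfx : f x = f z₀ := by linarith [hmin₀ x hx, hmin₀ y hy]
  have hfy : f y = f z₀ := by linarith [hmin₀ x hx, hmin₀ y hy]
  linarith [hmax x ⟨hx, hfx⟩, hmax y ⟨hy, hfy⟩]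

theorem two_mul_sum_sq_lt_sum_add_sq_add_sum_sub_sq {ι : Type*} [Fintype ι] (v : ι → ℝ)
    {w : ι → ℝ} (hw : w ≠ 0) :
    2 * ∑ i, v i ^ 2 < ∑ i, (v i + w i) ^ 2 + ∑ i, (v i - w i) ^ 2 := by
  obtain ⟨j, hj⟩ := Function.ne_iff.1 hw
  have hpos : 0 < ∑ i, w i ^ 2 :=
    sum_pos' (fun i _ => sq_nonneg (w i)) ⟨j, mem_univ j, sq_pos_of_ne_zero hj⟩
  have hsum : ∑ i, (v i + w i) ^ 2 + ∑ i, (v i - w i) ^ 2 =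
      2 * ∑ i, v i ^ 2 + 2 * ∑ i, w i ^ 2 := by
    simp only [Finset.mul_sum, ← sum_add_distrib]
    exact sum_congr rfl fun i _ => by ring
  linarith

namespace MvPolynomial

theorem IsSymmetric.eval_nonneg_of_forall_card_image_le {n k : ℕ}
    {F : MvPolynomial (Fin n) ℝ} (hF : F.IsSymmetric) (hk : 1 ≤ k)
    (hdeg : F.totalDegree ≤ 2 * k + 1)
    (hF₀ : ∀ y : Fin n → ℝ, (∀ i, 0 ≤ y i) →
      ((univ.image y).filter (· ≠ 0)).card ≤ k → 0 ≤ eval y F)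
    {x : Fin n → ℝ} (hx : ∀ i, 0 ≤ x i) : 0 ≤ eval x F := by
  obtain ⟨G, hG⟩ := (esymmAlgHom_fin_bijective ℝ n).2 ⟨F, hF⟩
  obtain rfl := congrArg Subtype.val hG
  simp only [eval_esymmAlgHom] at hF₀ ⊢
  have hmid : ∀ v w : Fin n → ℝ, (∀ i : Fin n, i.1 < k → w i = 0) →
      eval (v + w) G + eval (v - w) G = 2 * eval v G := fun v w hw =>
    eval_add_add_eval_sub
      (fun t ht => sum_filter_le_one_of_weight_le
        ((weight_le_totalDegree_esymmAlgHom ht).trans hdeg))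
      fun i hi => hw i (by simpa using hi)
  have hx₀ : x ∈ esymmFiber k x := ⟨hx, fun _ _ => rfl⟩
  obtain ⟨z, hz, hzmin, hzk⟩ := (isCompact_esymmFiber hk x).exists_isMinOn_and_of_midpoint
    ⟨x, hx₀⟩ ((continuous_eval G).comp (continuous_esymmVec (R := ℝ)))
    (g := fun y => ∑ i, esymmVec y i ^ 2) (continuous_finsetSum _ fun i _ =>
      ((continuous_apply i).comp (continuous_esymmVec (R := ℝ))).pow 2).continuousOn
    (p := fun z => ((univ.image z).filter (· ≠ 0)).card ≤ k) fun z hz hzk => by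
      obtain ⟨w, hw, hwk, ⟨xp, hxp, hxpw⟩, ⟨xm, hxm, hxmw⟩⟩ :=
        exists_esymmVec_eq_add_and_sub hz.1 (not_le.1 hzk)
      refine ⟨xp, ⟨hxp, fun i hi => ?_⟩, xm, ⟨hxm, fun i hi => ?_⟩, ?_, ?_⟩
      · simp [hxpw, hwk i hi, hz.2 i hi]
      · simp [hxmw, hwk i hi, hz.2 i hi]
      · simp only [Function.comp_apply, hxpw, hxmw, hmid _ _ hwk, le_refl]
      · simpa only [hxpw, hxmw, Pi.add_apply, Pi.sub_apply] using
          two_mul_sum_sq_lt_sum_add_sq_add_sum_sub_sq (esymmVec z) hw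
  exact (hF₀ z hz.1 hzk).trans (isMinOn_iff.1 hzmin x hx₀)

end MvPolynomial

theorem half_degree_principle_nonneg_orthant_general (n d : ℕ)
    (F : MvPolynomial (Fin n) ℝ) (hF : MvPolynomial.IsSymmetric F)
    (hdeg : F.totalDegree = d) (k : ℕ) (hk : k = max 2 (d / 2)) :
    (∀ x : Fin n → ℝ, (∀ i, 0 ≤ x i) → 0 ≤ MvPolynomial.eval x F) ↔
      (∀ y : Fin n → ℝ, (∀ i, 0 ≤ y i) →
        ((Finset.univ.image y).filter (· ≠ 0)).card ≤ k →
        0 ≤ MvPolynomial.eval y F) :=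
  ⟨fun h y hy _ => h y hy,
    fun h _ hx => hF.eval_nonneg_of_forall_card_image_le (by omega) (by omega) h hx⟩

/-- **Half degree principle on the nonnegative orthant.** A symmetric real polynomial `F` of
total degree `d ≥ 1` is nonnegative on the nonnegative orthant iff it is nonnegative on the
set of points of the nonnegative orthant whose nonzero coordinates take at most
`k = max {2, ⌊d/2⌋}` distinct values. -/
theorem half_degree_principle_nonneg_orthant (n d : ℕ) (hn : 1 ≤ n) (hd : 1 ≤ d)
    (F : MvPolynomial (Fin n) ℝ) (hF : MvPolynomial.IsSymmetric F)
    (hdeg : F.totalDegree = d) (k : ℕ) (hk : k = max 2 (d / 2)) :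
    (∀ x : Fin n → ℝ, (∀ i, 0 ≤ x i) → 0 ≤ MvPolynomial.eval x F) ↔
      (∀ y : Fin n → ℝ, (∀ i, 0 ≤ y i) →
        ((Finset.univ.image y).filter (· ≠ 0)).card ≤ k →
        0 ≤ MvPolynomial.eval y F) :=
  half_degree_principle_nonneg_orthant_general n d F hF hdeg k hk
end

section
/- Sylvester's theorem (rank part): Let f ∈ ℝ[t] be a monic polynomial of degree n ≥ 1. Then the rank of the Sylvester matrix S(f) equals the number of distinct complex roots of f. -/
/-!
The complex roots of a real polynomial are closed under conjugation, so over `ℂ` the Sylvester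
matrix is the Hankel matrix `(∑ α ^ (j + k))` of power sums of the roots. It factors as `Vᵀ D V`,
where `V = (β ^ k)` is the rectangular Vandermonde matrix of the distinct roots `β` and `D` is the
diagonal matrix of their multiplicities. As `f` has at most `n` distinct roots, the rows of `V`
are linearly independent, so `Vᵀ D V` has rank equal to the number of distinct roots. Finally,
rank does not change under the field extension `ℝ ⊆ ℂ`.
-/

/-- The `r`-th power sum `p_r(f) = α_1^r + ⋯ + α_n^r` of the complex roots (with multiplicity)
of a real polynomial `f`; it is a real number, realized here as the real part. -/
noncomputable def powerSumOfRoots (f : Polynomial ℝ) (r : ℕ) : ℝ :=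
  (((f.map (algebraMap ℝ ℂ)).roots.map (fun α => α ^ r)).sum).re

/-- The Sylvester matrix `S(f)` of a monic real polynomial of degree `n`:
`S(f)_{j,k} = p_{j+k-2}(f)` (with `1 ≤ j, k ≤ n`; here `j, k : Fin n` are 0-based). -/
noncomputable def sylvesterMatrix (n : ℕ) (f : Polynomial ℝ) : Matrix (Fin n) (Fin n) ℝ :=
  fun j k => powerSumOfRoots f ((j : ℕ) + (k : ℕ))

open Polynomial Matrix

namespace Matrix

variable {K : Type*} [Field K]

theorem rank_fromBlocks_one_zero (r s : ℕ) :
    (fromBlocks (1 : Matrix (Fin r) (Fin r) K) 0 0 (0 : Matrix (Fin s) (Fin s) K)).rank = r := by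
  classical
  rw [← diagonal_one, ← diagonal_zero, fromBlocks_diagonal, rank_diagonal]
  simp [Fintype.card_subtype, Finset.card_filter, Fintype.sum_sum_type]

theorem rank_map_algebraMap (L : Type*) [Field L] [Algebra K L] {m : Type*} [Fintype m]
    [DecidableEq m] (A : Matrix m m K) : (A.map (algebraMap K L)).rank = A.rank := by
  obtain ⟨V, U, e, hV, hU, hVAU⟩ := A.exists_rank_normal_form
  set f := (algebraMap K L).mapMatrix (m := m)
  have hnormal : f V * f A * f U = (fromBlocks 1 0 0 0).submatrix e e := by
    rw [← map_mul, ← map_mul, hVAU]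
    simp [f, ← submatrix_map, fromBlocks_map]
  change (f A).rank = A.rank
  rw [← rank_mul_eq_left_of_isUnit_det (f U) _ ((isUnit_iff_isUnit_det _).mp (hU.map f)),
    ← rank_mul_eq_right_of_isUnit_det (f V) _ ((isUnit_iff_isUnit_det _).mp (hV.map f)),
    ← mul_assoc, hnormal, rank_submatrix, rank_fromBlocks_one_zero]

theorem rank_mul_eq_right_of_injective {m n l : Type*} [Fintype n] [Fintype l] {A : Matrix m n K}
    (hA : Function.Injective A.mulVecLin) (B : Matrix n l K) : (A * B).rank = B.rank := by
  rw [rank, rank, mulVecLin_mul, LinearMap.range_comp]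
  exact (Submodule.equivMapOfInjective _ hA _).finrank_eq.symm

theorem rank_transpose_mul_diagonal_mul {ι m : Type*} [Fintype ι] [DecidableEq ι] [Fintype m]
    {A : Matrix ι m K} (hA : LinearIndependent K A.row) {d : ι → K} (hd : ∀ i, d i ≠ 0) :
    (Aᵀ * diagonal d * A).rank = Fintype.card ι := by
  have hAt : Function.Injective Aᵀ.mulVecLin := by
    rwa [mulVecLin_transpose, coe_vecMulLinear, vecMul_injective_iff]
  rw [Matrix.mul_assoc, rank_mul_eq_right_of_injective hAt,
    rank_mul_eq_right_of_isUnit_det _ _ (by simpa [det_diagonal, Finset.prod_ne_zero_iff] using hd),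
    hA.rank_matrix]

/-- The first `card ι` columns form a square Vandermonde matrix with nonzero determinant. -/
theorem linearIndependent_rectVandermonde_one_row {ι : Type*} [Fintype ι] {x : ι → K}
    (hx : Function.Injective x) {n : ℕ} (hn : Fintype.card ι ≤ n) :
    LinearIndependent K (rectVandermonde x 1 n).row := by
  rw [← vecMul_injective_iff, ← coe_vecMulLinear, injective_iff_map_eq_zero]
  intro c hc
  set e := Fintype.equivFin ι
  have hce : c ∘ e.symm = 0 := by
    refine eq_zero_of_forall_pow_sum_mul_pow_eq_zero (hx.comp e.symm.injective) fun j => ?_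
    have hcj := congrFun hc (Fin.castLE hn j)
    simp only [coe_vecMulLinear, vecMul, dotProduct, rectVandermonde_apply, Pi.one_apply, one_pow,
      mul_one] at hcj
    simpa [← e.symm.sum_comp] using hcj
  funext i
  simpa using congrFun hce (e i)

end Matrix

namespace Multiset

variable {K : Type*} [Field K]

def powerSumHankel (μ : Multiset K) (n : ℕ) : Matrix (Fin n) (Fin n) K :=
  of fun j k => (μ.map (· ^ ((j : ℕ) + k))).sum

theorem powerSumHankel_eq_transpose_mul_diagonal_mul [DecidableEq K] (μ : Multiset K) (n : ℕ) :
    μ.powerSumHankel n =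
      (rectVandermonde ((↑) : μ.toFinset → K) 1 n)ᵀ *
        diagonal (fun β : μ.toFinset => (μ.count ↑β : K)) *
        rectVandermonde ((↑) : μ.toFinset → K) 1 n := by
  ext j k
  rw [powerSumHankel, of_apply, Finset.sum_multiset_map_count, mul_apply, ← Finset.sum_coe_sort]
  refine Finset.sum_congr rfl fun β _ => ?_
  simp only [mul_diagonal, transpose_apply, rectVandermonde_apply, Pi.one_apply, one_pow, mul_one,
    nsmul_eq_mul, pow_add]
  ring

theorem rank_powerSumHankel [CharZero K] [DecidableEq K] (μ : Multiset K) {n : ℕ}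
    (hn : μ.toFinset.card ≤ n) : (μ.powerSumHankel n).rank = μ.toFinset.card := by
  have hrows := linearIndependent_rectVandermonde_one_row Subtype.val_injective
    (by rwa [Fintype.card_coe] : Fintype.card μ.toFinset ≤ n)
  have hcount (β : μ.toFinset) : (μ.count ↑β : K) ≠ 0 := by
    simpa using mem_toFinset.mp β.2
  rw [powerSumHankel_eq_transpose_mul_diagonal_mul, rank_transpose_mul_diagonal_mul hrows hcount,
    Fintype.card_coe]

end Multiset

theorem Polynomial.roots_map_ofReal_map_conj (f : ℝ[X]) :
    (f.map (algebraMap ℝ ℂ)).roots.map (starRingEnd ℂ) = (f.map (algebraMap ℝ ℂ)).roots := by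
  have hconj : (f.map (algebraMap ℝ ℂ)).map (starRingEnd ℂ) = f.map (algebraMap ℝ ℂ) := by
    rw [Polynomial.map_map]
    congr 1
    exact RingHom.ext Complex.conj_ofReal
  conv_rhs => rw [← hconj]
  exact ((IsAlgClosed.splits _).roots_map _).symm

theorem ofReal_powerSumOfRoots (f : ℝ[X]) (r : ℕ) :
    (powerSumOfRoots f r : ℂ) = ((f.map (algebraMap ℝ ℂ)).roots.map (· ^ r)).sum := by
  refine Complex.conj_eq_iff_re.mp ?_
  conv_rhs => rw [← f.roots_map_ofReal_map_conj]
  simp [map_multiset_sum, Multiset.map_map]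

theorem sylvesterMatrix_map_ofReal (n : ℕ) (f : ℝ[X]) :
    (sylvesterMatrix n f).map (algebraMap ℝ ℂ) =
      (f.map (algebraMap ℝ ℂ)).roots.powerSumHankel n := by
  ext j k
  rw [map_apply, sylvesterMatrix, Complex.coe_algebraMap, ofReal_powerSumOfRoots]
  rfl

theorem sylvester_rank_eq_card_distinct_roots_general (n : ℕ)
    (f : Polynomial ℝ) (hdeg : f.natDegree = n) :
    (sylvesterMatrix n f).rank = (f.map (algebraMap ℝ ℂ)).roots.toFinset.card := by
  rw [← rank_map_algebraMap ℂ, sylvesterMatrix_map_ofReal, Multiset.rank_powerSumHankel]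
  calc (f.map (algebraMap ℝ ℂ)).roots.toFinset.card
      ≤ Multiset.card (f.map (algebraMap ℝ ℂ)).roots := Multiset.toFinset_card_le _
    _ ≤ (f.map (algebraMap ℝ ℂ)).natDegree := card_roots' _
    _ = n := by rw [natDegree_map, hdeg]

/-- **Sylvester's theorem, rank part.** For a monic real polynomial `f` of degree `n ≥ 1`,
the rank of the Sylvester matrix `S(f)` equals the number of distinct complex roots of `f`. -/
theorem sylvester_rank_eq_card_distinct_roots (n : ℕ) (hn : 1 ≤ n)
    (f : Polynomial ℝ) (hmonic : f.Monic) (hdeg : f.natDegree = n) :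
    (sylvesterMatrix n f).rank = (f.map (algebraMap ℝ ℂ)).roots.toFinset.card :=
  sylvester_rank_eq_card_distinct_roots_general n f hdeg
end

section
/- A monic polynomial f ∈ ℝ[t] of degree n ≥ 1 is hyperbolic (i.e., all of its complex roots are real) if and only if its Sylvester matrix S(f) is positive semidefinite. -/
open Polynomial Matrix ComplexConjugate Complex

theorem sylvesterMatrix_dotProduct_mulVec (n : ℕ) (f : ℝ[X]) (x : Fin n → ℝ) :
    x ⬝ᵥ (sylvesterMatrix n f *ᵥ x) =
      ((f.aroots ℂ).map fun β => ((∑ j, (x j : ℂ) * β ^ (j : ℕ)) ^ 2).re).sum := by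
  have hsq (β : ℂ) : ((∑ j, (x j : ℂ) * β ^ (j : ℕ)) ^ 2).re =
      ∑ j : Fin n, ∑ k : Fin n, x j * (x k * (β ^ ((j : ℕ) + k)).re) := by
    simp only [sq, Finset.sum_mul_sum, re_sum, pow_add]
    refine Finset.sum_congr rfl fun j _ => Finset.sum_congr rfl fun k _ => ?_
    rw [mul_mul_mul_comm, ← ofReal_mul, re_ofReal_mul]
    ring
  have hre (m : Multiset ℂ) : m.sum.re = (m.map re).sum :=
    map_multiset_sum reAddGroupHom m
  simp only [hsq, hre, Multiset.map_map, Function.comp_def, Multiset.sum_map_sum,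
    Multiset.sum_map_mul_left, dotProduct, mulVec, sylvesterMatrix, powerSumOfRoots, Finset.mul_sum]
  exact Finset.sum_congr rfl fun j _ => Finset.sum_congr rfl fun k _ => by ring

theorem sylvesterMatrix_isHermitian (n : ℕ) (f : ℝ[X]) : (sylvesterMatrix n f).IsHermitian :=
  Matrix.IsHermitian.ext fun j k => by simp [sylvesterMatrix, add_comm]

theorem sylvesterMatrix_posSemidef_of_splits (n : ℕ) {f : ℝ[X]} (hf : f.Splits) :
    (sylvesterMatrix n f).PosSemidef := by
  refine .of_dotProduct_mulVec_nonneg (sylvesterMatrix_isHermitian n f) fun x => ?_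
  rw [star_trivial, sylvesterMatrix_dotProduct_mulVec, aroots_def, hf.roots_map, Multiset.map_map]
  refine Multiset.sum_nonneg fun t ht => ?_
  obtain ⟨b, -, rfl⟩ := Multiset.mem_map.mp ht
  have hreal : ∑ j : Fin n, (x j : ℂ) * (algebraMap ℝ ℂ b) ^ (j : ℕ) =
      ((∑ j, x j * b ^ (j : ℕ) : ℝ) : ℂ) := by
    push_cast; rfl
  simp only [Function.comp_apply, hreal, ← ofReal_pow, ofReal_re]
  positivity

theorem conj_mem_aroots {f : ℝ[X]} {β : ℂ} (hβ : β ∈ f.aroots ℂ) : conj β ∈ f.aroots ℂ := by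
  rw [mem_aroots] at hβ ⊢
  exact ⟨hβ.1, by rw [aeval_conj, hβ.2, map_zero]⟩

theorem exists_mem_aroots_conj_ne_of_not_splits {f : ℝ[X]} (hf : ¬f.Splits) :
    ∃ α ∈ f.aroots ℂ, conj α ≠ α := by
  by_contra! h
  refine hf (.of_splits_map (algebraMap ℝ ℂ) (IsAlgClosed.splits _) fun a ha => ?_)
  obtain ⟨r, rfl⟩ := conj_eq_iff_real.mp (h a ha)
  exact ⟨r, rfl⟩

theorem sum_two_mul_re_coeff_mul_pow {n : ℕ} {p : ℂ[X]} (hp : p.natDegree < n) (z : ℂ) :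
    ∑ j : Fin n, ((2 * (p.coeff j).re : ℝ) : ℂ) * z ^ (j : ℕ) =
      p.eval z + conj (p.eval (conj z)) := by
  rw [eval_eq_sum_range' hp, eval_eq_sum_range' hp, map_sum, ← Finset.sum_add_distrib,
    ← Fin.sum_univ_eq_sum_range]
  refine Finset.sum_congr rfl fun j _ => ?_
  rw [map_mul, map_pow, conj_conj, ← add_mul, add_conj]

theorem exists_natDegree_lt_eval_eq_ite_of_mem_roots {K : Type*} [Field K] [DecidableEq K]
    {g : K[X]} {α : K} (hα : α ∈ g.roots) (c : K) :
    ∃ P : K[X], P.natDegree < g.natDegree ∧ ∀ γ ∈ g.roots, P.eval γ = if γ = α then c else 0 := by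
  set T := g.roots.toFinset
  have hαT : α ∈ T := Multiset.mem_toFinset.mpr hα
  have hinj : Set.InjOn id (T : Set K) := Function.injective_id.injOn
  refine ⟨C c * Lagrange.basis T id α, ?_, fun γ hγ => ?_⟩
  · calc (C c * Lagrange.basis T id α).natDegree ≤ (Lagrange.basis T id α).natDegree :=
          natDegree_C_mul_le _ _
      _ = T.card - 1 := Lagrange.natDegree_basis hinj hαT
      _ < T.card := Nat.sub_lt (Finset.card_pos.mpr ⟨α, hαT⟩) one_pos
      _ ≤ g.roots.card := Multiset.toFinset_card_le _
      _ ≤ g.natDegree := card_roots' g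
  · have hγT : γ ∈ T := Multiset.mem_toFinset.mpr hγ
    split_ifs with h
    · subst h
      have hbasis : (Lagrange.basis T id γ).eval γ = 1 := Lagrange.eval_basis_self hinj hγT
      simp [hbasis]
    · have hbasis : (Lagrange.basis T id α).eval γ = 0 :=
        Lagrange.eval_basis_of_ne (v := id) (Ne.symm h) hγT
      simp [hbasis]

theorem exists_sylvesterMatrix_dotProduct_mulVec_neg {n : ℕ} {f : ℝ[X]} (hn : f.natDegree ≤ n)
    {α : ℂ} (hα : α ∈ f.aroots ℂ) (hαc : conj α ≠ α) :
    ∃ x, x ⬝ᵥ (sylvesterMatrix n f *ᵥ x) < 0 := by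
  obtain ⟨P, hPdeg, hP⟩ := exists_natDegree_lt_eval_eq_ite_of_mem_roots hα I
  replace hPdeg : P.natDegree < n := hPdeg.trans_le ((natDegree_map _).trans_le hn)
  have hPre (γ : ℂ) (hγ : γ ∈ f.aroots ℂ) : (P.eval γ).re = 0 := by
    rw [hP γ hγ]; split_ifs <;> simp
  set w : ℂ → ℂ := fun β => P.eval β + conj (P.eval (conj β))
  have hw_nonpos (β : ℂ) (hβ : β ∈ f.aroots ℂ) : (w β ^ 2).re ≤ 0 := by
    have hwre : (w β).re = 0 := by
      simp only [w, add_re, conj_re, hPre β hβ, hPre (conj β) (conj_mem_aroots hβ), add_zero]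
    rw [sq, mul_re, hwre]
    nlinarith [sq_nonneg (w β).im]
  have hwα : w α = I := by
    simp [w, hP α hα, hP (conj α) (conj_mem_aroots hα), hαc]
  refine ⟨fun j => 2 * (P.coeff j).re, ?_⟩
  rw [sylvesterMatrix_dotProduct_mulVec]
  simp only [sum_two_mul_re_coeff_mul_pow hPdeg]
  calc ((f.aroots ℂ).map fun β => (w β ^ 2).re).sum < ((f.aroots ℂ).map fun _ => (0 : ℝ)).sum :=
        Multiset.sum_lt_sum hw_nonpos ⟨α, hα, by simp [hwα]⟩
    _ = 0 := by simp

theorem splits_of_sylvesterMatrix_posSemidef {n : ℕ} {f : ℝ[X]} (hn : f.natDegree ≤ n)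
    (hS : (sylvesterMatrix n f).PosSemidef) : f.Splits := by
  by_contra hf
  obtain ⟨α, hα, hαc⟩ := exists_mem_aroots_conj_ne_of_not_splits hf
  obtain ⟨x, hx⟩ := exists_sylvesterMatrix_dotProduct_mulVec_neg hn hα hαc
  exact hx.not_ge (by simpa using hS.dotProduct_mulVec_nonneg x)

theorem hyperbolic_iff_sylvester_posSemidef_general (n : ℕ)
    (f : Polynomial ℝ) (hdeg : f.natDegree = n) :
    f.Splits ↔ (sylvesterMatrix n f).PosSemidef :=
  ⟨sylvesterMatrix_posSemidef_of_splits n, splits_of_sylvesterMatrix_posSemidef hdeg.le⟩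

/-- A monic real polynomial `f` of degree `n ≥ 1` is hyperbolic (all its roots are real,
i.e. `f` splits over `ℝ`) iff its Sylvester matrix is positive semidefinite. -/
theorem hyperbolic_iff_sylvester_posSemidef (n : ℕ) (hn : 1 ≤ n)
    (f : Polynomial ℝ) (hmonic : f.Monic) (hdeg : f.natDegree = n) :
    f.Splits ↔ (sylvesterMatrix n f).PosSemidef :=
  hyperbolic_iff_sylvester_posSemidef_general n f hdeg
end

section
/- Let f ∈ ℝ[t] be a monic hyperbolic polynomial of degree n ≥ 1. If ξ ∈ ℝ is a local maximum point of the function t ↦ f(t), then f(ξ) ≥ 0; if ξ is a local minimum point, then f(ξ) ≤ 0. -/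
/-!
Write `f = ∏ (t - r)` over its real roots. Pairing the factors at `ξ + h` and `ξ - h` gives
`f(ξ + h) f(ξ - h) = ∏ ((ξ - r)² - h²)`, which for `ξ` off the roots and small `h ≠ 0` is strictly
less than `∏ (ξ - r)² = f(ξ)²`. At a local maximum with `f(ξ) < 0`, both `f(ξ ± h)` are at most
`f(ξ) < 0`, so their product is at least `f(ξ)²`, a contradiction; a local minimum is a local
maximum of `-f`.
-/

open Polynomial Filter Topology

namespace Polynomial

lemma Splits.eval_add_mul_eval_sub_of_monic {R : Type*} [CommRing R] [IsDomain R] {f : R[X]}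
    (hf : f.Splits) (hm : f.Monic) (x h : R) :
    f.eval (x + h) * f.eval (x - h) = (f.roots.map fun r => (x - r) ^ 2 - h ^ 2).prod := by
  rw [hf.eval_eq_prod_roots_of_monic hm, hf.eval_eq_prod_roots_of_monic hm,
    ← Multiset.prod_map_mul]
  exact congrArg _ (Multiset.map_congr rfl fun r _ => by ring)

lemma Splits.eventually_eval_add_mul_eval_sub_lt_sq {f : ℝ[X]} (hf : f.Splits) (hm : f.Monic)
    (hdeg : 0 < f.natDegree) {x : ℝ} (hx : f.eval x ≠ 0) :
    ∀ᶠ h in 𝓝[≠] 0, f.eval (x + h) * f.eval (x - h) < f.eval x ^ 2 := by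
  have hroots : f.roots ≠ 0 := by
    rw [← Multiset.card_pos, ← hf.natDegree_eq_card_roots]
    exact hdeg
  have hsep : ∀ r ∈ f.roots, 0 < (x - r) ^ 2 := fun r hr => by
    have : x - r ≠ 0 := sub_ne_zero.mpr (by rintro rfl; exact hx (isRoot_of_mem_roots hr))
    positivity
  have hsmall : ∀ᶠ h in 𝓝 (0 : ℝ), ∀ r ∈ f.roots.toFinset, h ^ 2 < (x - r) ^ 2 := by
    refine (eventually_all_finset _).mpr fun r hr => ?_
    exact (continuous_pow 2).continuousAt.eventually_lt continuousAt_const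
      (by simpa using hsep r (Multiset.mem_toFinset.mp hr))
  filter_upwards [nhdsWithin_le_nhds hsmall, self_mem_nhdsWithin] with h hh hne
  have hsq : f.eval x ^ 2 = f.eval (x + 0) * f.eval (x - 0) := by simp [sq]
  rw [hsq, hf.eval_add_mul_eval_sub_of_monic hm, hf.eval_add_mul_eval_sub_of_monic hm]
  refine Multiset.prod_map_lt_prod_map hroots _ _ (fun r hr => ?_) fun r _ => ?_
  · exact sub_pos.mpr (hh r (Multiset.mem_toFinset.mpr hr))
  · have : h ≠ 0 := hne
    have : 0 < h ^ 2 := by positivity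
    linarith

end Polynomial

section LocalExtr

variable {g : ℝ → ℝ} {x : ℝ}

lemma IsLocalMax.nonneg_of_eventually_mul_lt_sq (hmax : IsLocalMax g x)
    (hg : ∀ᶠ h in 𝓝[≠] 0, g (x + h) * g (x - h) < g x ^ 2) : 0 ≤ g x := by
  by_contra! hneg
  have hshift : ∀ c : ℝ, Tendsto (fun h => x + c * h) (𝓝[≠] 0) (𝓝 x) := fun c =>
    tendsto_nhdsWithin_of_tendsto_nhds <|
      (by fun_prop : Continuous fun h : ℝ => x + c * h).tendsto' 0 x (by simp)
  obtain ⟨h, hlt, hplus, hminus⟩ :=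
    (hg.and (((hshift 1).eventually hmax).and ((hshift (-1)).eventually hmax))).exists
  simp only [one_mul, neg_one_mul, ← sub_eq_add_neg] at hplus hminus
  nlinarith

lemma IsLocalMin.nonpos_of_eventually_mul_lt_sq (hmin : IsLocalMin g x)
    (hg : ∀ᶠ h in 𝓝[≠] 0, g (x + h) * g (x - h) < g x ^ 2) : g x ≤ 0 := by
  have := hmin.neg.nonneg_of_eventually_mul_lt_sq (by simpa only [neg_mul_neg, neg_sq] using hg)
  linarith

end LocalExtr

/-- A monic hyperbolic polynomial of degree `n ≥ 1` is nonnegative at every local maximum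
point and nonpositive at every local minimum point. -/
theorem hyperbolic_local_extrema (n : ℕ) (hn : 1 ≤ n) (f : Polynomial ℝ)
    (hmonic : f.Monic) (hdeg : f.natDegree = n) (hsplit : f.Splits)
    (ξ : ℝ) :
    (IsLocalMax (fun t => f.eval t) ξ → 0 ≤ f.eval ξ) ∧
      (IsLocalMin (fun t => f.eval t) ξ → f.eval ξ ≤ 0) := by
  by_cases hroot : f.eval ξ = 0
  · simp [hroot]
  have hlt := hsplit.eventually_eval_add_mul_eval_sub_lt_sq hmonic (by omega) hroot
  exact ⟨fun hmax => hmax.nonneg_of_eventually_mul_lt_sq hlt,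
    fun hmin => hmin.nonpos_of_eventually_mul_lt_sq hlt⟩
end

section
/- Let f = t^n + a_1 t^{n−1} + ⋯ + a_n ∈ ℝ[t] be a monic hyperbolic polynomial of degree n. If a_i = a_{i+1} = 0 for some i with 1 ≤ i ≤ n − 1, then a_j = 0 for all j with i ≤ j ≤ n. -/
/-!
Put `k = n - i - 1` and `g = f⁽ᵏ⁾`. The two lowest coefficients of `g` are nonzero multiples of
`a_{i+1}` and `a_i`, so `0` is a root of `g` of multiplicity at least `2`.

By Rolle, the derivative of a real-rooted polynomial `p` is real-rooted, and a root of `p'` of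
multiplicity at least `2` must be a root of `p`: the roots of `p'` at the roots of `p`, together
with one root of `p'` strictly between any two consecutive distinct roots of `p`, already account
for all `deg p - 1` roots of `p'`. Climbing from `g` back up to `f`, the multiplicity of the root
`0` therefore grows by one at each step, so `t ^ (n - i + 1)` divides `f`.
-/

namespace Polynomial

theorem natDegree_iterate_derivative_eq {R : Type*} [Semiring R] [IsAddTorsionFree R]
    (p : R[X]) (k : ℕ) : (derivative^[k] p).natDegree = p.natDegree - k := by
  induction k with
  | zero => rfl
  | succ k ih =>
    rw [Function.iterate_succ_apply', natDegree_derivative, ih, Nat.sub_sub]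

theorem card_roots_add_rootMultiplicity_derivative_le (p : ℝ[X]) {x : ℝ} (hx : ¬p.IsRoot x) :
    Multiset.card p.roots + p.derivative.rootMultiplicity x ≤
      Multiset.card p.derivative.roots + 2 := by
  classical
  rcases Nat.eq_zero_or_pos (p.derivative.rootMultiplicity x) with hx0 | hx0
  · have := p.card_roots_le_derivative
    omega
  have hp' : p.derivative ≠ 0 := fun h => by simp [h] at hx0
  have hxD : x ∈ p.derivative.roots := (mem_roots hp').2 ((rootMultiplicity_pos hp').1 hx0)
  rw [← count_roots] at hx0 ⊢
  set D := p.derivative.roots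
  set S := p.roots.toFinset
  set T := D.toFinset
  have hxTS : x ∈ T \ S := by
    simp only [T, S, Finset.mem_sdiff, Multiset.mem_toFinset, mem_roots', hx, and_false,
      not_false_eq_true, and_true, hxD]
  have hroots : Multiset.card p.roots ≤ ∑ a ∈ S, D.count a + S.card := by
    rw [← Multiset.toFinset_sum_count_eq, Finset.card_eq_sum_ones, ← Finset.sum_add_distrib]
    refine Finset.sum_le_sum fun a _ => ?_
    rw [count_roots, count_roots]
    have := p.rootMultiplicity_sub_one_le_derivative_rootMultiplicity a
    omega
  have hrolle : S.card ≤ (T \ S).card + 1 :=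
    p.card_roots_toFinset_le_card_roots_derivative_sdiff_roots_succ
  have hnew : (T \ S).card + (D.count x - 1) ≤ ∑ a ∈ T \ S, D.count a := by
    have hsucc : ∀ a ∈ T \ S, D.count a - 1 + 1 = D.count a := fun a ha =>
      Nat.sub_add_cancel (Multiset.count_pos.2 (Multiset.mem_toFinset.1 (Finset.mem_sdiff.1 ha).1))
    rw [← Finset.sum_congr rfl hsucc, Finset.sum_add_distrib, ← Finset.card_eq_sum_ones, add_comm]
    gcongr
    exact Finset.single_le_sum (f := fun a => D.count a - 1) (fun _ _ => Nat.zero_le _) hxTS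
  have hD : ∑ a ∈ S, D.count a + ∑ a ∈ T \ S, D.count a = Multiset.card D := by
    rw [← Finset.sum_union Finset.disjoint_sdiff, Finset.union_sdiff_self_eq_union,
      ← Multiset.toFinset_sum_count_eq, ← Finset.sum_subset Finset.subset_union_right]
    intro a _ haT
    exact Multiset.count_eq_zero.2 (mt Multiset.mem_toFinset.2 haT)
  omega

namespace Splits

variable {p : ℝ[X]}

theorem derivative (hp : p.Splits) : p.derivative.Splits := by
  rw [splits_iff_card_roots] at hp ⊢
  have := p.card_roots_le_derivative
  have := p.derivative.card_roots'
  have := natDegree_derivative p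
  omega

theorem iterate_derivative (hp : p.Splits) (k : ℕ) : (Polynomial.derivative^[k] p).Splits := by
  induction k with
  | zero => exact hp
  | succ k ih => rw [Function.iterate_succ_apply']; exact ih.derivative

theorem isRoot_of_two_le_rootMultiplicity_derivative (hp : p.Splits) {x : ℝ}
    (h : 2 ≤ p.derivative.rootMultiplicity x) : p.IsRoot x := by
  by_contra hx
  have hcard := p.card_roots_add_rootMultiplicity_derivative_le hx
  have hp' : p.derivative ≠ 0 := fun h0 => by simp [h0] at h
  have := splits_iff_card_roots.1 hp
  have := p.derivative.card_roots'
  have := natDegree_derivative p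
  have := derivative_ne_zero.1 hp'
  omega

theorem rootMultiplicity_eq_derivative_add_one (hp : p.Splits) {x : ℝ}
    (h : 2 ≤ p.derivative.rootMultiplicity x) :
    p.rootMultiplicity x = p.derivative.rootMultiplicity x + 1 := by
  have hroot := hp.isRoot_of_two_le_rootMultiplicity_derivative h
  have hp0 : p ≠ 0 := fun h0 => by simp [h0] at h
  rw [derivative_rootMultiplicity_of_root hroot]
  have := (rootMultiplicity_pos hp0).2 hroot
  omega

theorem rootMultiplicity_eq_iterate_derivative_add (hp : p.Splits) {x : ℝ} (k : ℕ)
    (h : 2 ≤ (Polynomial.derivative^[k] p).rootMultiplicity x) :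
    p.rootMultiplicity x = (Polynomial.derivative^[k] p).rootMultiplicity x + k := by
  induction k generalizing p with
  | zero => rfl
  | succ k ih =>
    rw [Function.iterate_succ_apply] at h ⊢
    have hk := ih hp.derivative h
    rw [hp.rootMultiplicity_eq_derivative_add_one (by omega), hk]
    omega

end Splits

end Polynomial

open Polynomial

/-- The paper's `a_i` is `f.coeff (n - i)`. -/
theorem consecutive_zero_coeffs_general (n : ℕ) (f : Polynomial ℝ)
    (hdeg : f.natDegree = n) (hsplit : (f.map (RingHom.id ℝ)).Splits)
    (i : ℕ) (hi1 : 1 ≤ i) (hi2 : i ≤ n - 1)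
    (h1 : f.coeff (n - i) = 0) (h2 : f.coeff (n - (i + 1)) = 0) :
    ∀ j, i ≤ j → j ≤ n → f.coeff (n - j) = 0 := by
  intro j hij _
  rw [map_id] at hsplit
  set k := n - (i + 1) with hk
  have hg : derivative^[k] f ≠ 0 := by
    refine ne_zero_of_natDegree_gt (n := 0) ?_
    rw [natDegree_iterate_derivative_eq, hdeg]
    omega
  have hg2 : 2 ≤ (derivative^[k] f).rootMultiplicity 0 := by
    rw [rootMultiplicity_eq_natTrailingDegree']
    refine le_natTrailingDegree hg fun m hm => ?_
    rw [coeff_iterate_derivative]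
    interval_cases m
    · rw [zero_add, h2, smul_zero]
    · rw [show 1 + k = n - i by omega, h1, smul_zero]
  have hf := hsplit.rootMultiplicity_eq_iterate_derivative_add k hg2
  rw [rootMultiplicity_eq_natTrailingDegree'] at hf
  exact coeff_eq_zero_of_lt_natTrailingDegree (by omega)

/-- For a monic hyperbolic polynomial `f = t^n + a_1 t^{n−1} + ⋯ + a_n` (so `a_i` is the
coefficient of `t^{n−i}`): if `a_i = a_{i+1} = 0` for some `1 ≤ i ≤ n − 1`, then `a_j = 0`
for all `i ≤ j ≤ n`. -/
theorem consecutive_zero_coeffs (n : ℕ) (f : Polynomial ℝ)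
    (hmonic : f.Monic) (hdeg : f.natDegree = n) (hsplit : (f.map (RingHom.id ℝ)).Splits)
    (i : ℕ) (hi1 : 1 ≤ i) (hi2 : i ≤ n - 1)
    (h1 : f.coeff (n - i) = 0) (h2 : f.coeff (n - (i + 1)) = 0) :
    ∀ j, i ≤ j → j ≤ n → f.coeff (n - j) = 0 :=
  consecutive_zero_coeffs_general n f hdeg hsplit i hi1 hi2 h1 h2
end

section
/- Let f ∈ ℝ[t] be a monic hyperbolic polynomial of degree n having exactly k distinct roots, with k < n. Then for each s with 1 ≤ s ≤ k there exist a monic polynomial g ∈ ℝ[t] of degree n − s and a δ > 0 such that for all ε with 0 < ε < δ, both f + εg and f − εg are hyperbolic and have strictly more than k distinct real roots. -/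
/-!
Choose a set `S` of `s` distinct roots of `f` containing a multiple root `r`, and factor
`f = g * h` with `h = ∏ b ∈ S, (X - b)`, so that `f ± ε g = g * (h ± ε)`. For small `ε ≠ 0`,
`h ± ε` still changes sign on a small interval around each point of `S`, so it has `s` distinct
real roots, none of which is a root of `f`. The roots of `g` are all roots of `f` outside `S`
together with `r`, hence `f ± ε g` splits with at least `(k - s + 1) + s` distinct roots.
-/

open Polynomial Filter Topology

theorem Finset.exists_pos_forall_two_mul_lt_abs_sub (T : Finset ℝ) :
    ∃ u > 0, ∀ a ∈ T, ∀ b ∈ T, a ≠ b → 2 * u < |a - b| := by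
  have hsmall : ∀ᶠ u in 𝓝[>] (0 : ℝ), ∀ a ∈ T, ∀ b ∈ T, a ≠ b → 2 * u < |a - b| := by
    simp only [Finset.eventually_all, eventually_imp_distrib_left]
    intro a _ b _ hab
    refine nhdsWithin_le_nhds (ContinuousAt.eventually_lt (by fun_prop) continuousAt_const ?_)
    simpa using sub_ne_zero.2 hab
  obtain ⟨u, hu, hpos⟩ := (hsmall.and self_mem_nhdsWithin).exists
  exact ⟨u, hpos, hu⟩

theorem Multiset.exists_one_lt_count_of_card_toFinset_lt {α : Type*} [DecidableEq α]
    {R : Multiset α} (h : R.toFinset.card < card R) : ∃ r, 1 < R.count r := by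
  by_contra! hR
  exact h.ne (toFinset_card_eq_card_iff_nodup.2 (nodup_iff_count_le_one.2 hR))

theorem Multiset.card_toFinset_lt_card_toFinset_sub_add_card {α : Type*} [DecidableEq α]
    {R : Multiset α} {S : Finset α} {r : α} (hrS : r ∈ S) (hr : 1 < R.count r) :
    R.toFinset.card < (R - S.val).toFinset.card + S.card := by
  have hcover : R.toFinset ⊆ (R - S.val).toFinset ∪ S := fun x hx => by
    have := mem_add.1 (mem_of_le (le_tsub_add (a := S.val)) (mem_toFinset.1 hx))
    simpa only [Finset.mem_union, mem_toFinset, Finset.mem_val] using this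
  have hshared : r ∈ (R - S.val).toFinset ∩ S := by
    rw [Finset.mem_inter, mem_toFinset, ← count_pos, count_sub,
      count_eq_one_of_mem S.nodup hrS]
    exact ⟨by omega, hrS⟩
  have := Finset.card_union_add_card_inter (R - S.val).toFinset S
  have := Finset.card_pos.2 ⟨r, hshared⟩
  have := Finset.card_le_card hcover
  omega

theorem Polynomial.splits_of_natDegree_le_card_roots_toFinset {K : Type*} [Field K]
    [DecidableEq K] {p : K[X]} (h : p.natDegree ≤ p.roots.toFinset.card) : p.Splits :=
  splits_iff_card_roots.2 (le_antisymm (card_roots' p) (h.trans (Multiset.toFinset_card_le _)))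

theorem Polynomial.exists_isRoot_mem_Ioo_of_eval_mul_eval_neg (p : ℝ[X]) {a b : ℝ} (hab : a ≤ b)
    (h : p.eval a * p.eval b < 0) : ∃ x ∈ Set.Ioo a b, p.IsRoot x := by
  have hc := p.continuous.continuousOn (s := Set.Icc a b)
  rcases mul_neg_iff.1 h with ⟨ha, hb⟩ | ⟨ha, hb⟩
  · exact intermediate_value_Ioo' hab hc ⟨hb, ha⟩
  · exact intermediate_value_Ioo hab hc ⟨ha, hb⟩

theorem Polynomial.card_le_card_roots_toFinset_of_sign_changes {p : ℝ[X]} {S : Finset ℝ} {u : ℝ}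
    (hu : 0 < u) (hsep : ∀ a ∈ S, ∀ b ∈ S, a ≠ b → 2 * u ≤ |a - b|)
    (hsign : ∀ a ∈ S, p.eval (a - u) * p.eval (a + u) < 0) :
    S.card ≤ p.roots.toFinset.card := by
  choose! ρ hρ hroot using fun a ha =>
    p.exists_isRoot_mem_Ioo_of_eval_mul_eval_neg (by linarith) (hsign a ha)
  refine Finset.card_le_card_of_injOn ρ (fun a ha => ?_) (fun a ha b hb hab => ?_)
  · have hp : p ≠ 0 := by rintro rfl; simpa using hsign a ha
    exact Multiset.mem_toFinset.2 ((mem_roots hp).2 (hroot a ha))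
  · by_contra hne
    have ha := hρ a ha
    have hb := hρ b hb
    rw [hab] at ha
    have hclose : |a - b| < 2 * u :=
      abs_sub_lt_iff.2 ⟨by linarith [ha.1, hb.2], by linarith [ha.2, hb.1]⟩
    linarith [hsep a ‹_› b ‹_› hne]

theorem Polynomial.eval_prod_X_sub_C_mul_eval_prod_X_sub_C_neg {S : Finset ℝ} {a u : ℝ}
    (ha : a ∈ S) (hu : 0 < u) (hsep : ∀ b ∈ S, b ≠ a → u < |a - b|) :
    (∏ b ∈ S, (X - C b)).eval (a - u) * (∏ b ∈ S, (X - C b)).eval (a + u) < 0 := by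
  simp only [eval_prod, eval_sub, eval_X, eval_C, ← Finset.prod_mul_distrib]
  rw [← Finset.mul_prod_erase S _ ha]
  refine mul_neg_of_neg_of_pos (by nlinarith) (Finset.prod_pos fun b hb => ?_)
  have hub : u ^ 2 < (a - b) ^ 2 := by
    rw [← sq_abs (a - b)]
    exact pow_lt_pow_left₀ (hsep b (Finset.mem_of_mem_erase hb) (Finset.ne_of_mem_erase hb))
      hu.le two_ne_zero
  nlinarith

theorem Polynomial.eventually_eval_add_C_ne_zero {K : Type*} [Semiring K] [TopologicalSpace K]
    [ContinuousAdd K] [T1Space K] (p : K[X]) (x : K) : ∀ᶠ η in 𝓝[≠] 0, (p + C η).eval x ≠ 0 := by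
  simp only [eval_add, eval_C]
  by_cases hx : p.eval x = 0
  · simp only [hx, zero_add]
    exact eventually_mem_nhdsWithin
  · exact nhdsWithin_le_nhds <|
      (continuous_const_add _).continuousAt.eventually_ne (by simpa using hx)

theorem Polynomial.eventually_eval_add_C_mul_eval_add_C_neg {p : ℝ[X]} {x y : ℝ}
    (h : p.eval x * p.eval y < 0) :
    ∀ᶠ η in 𝓝 0, (p + C η).eval x * (p + C η).eval y < 0 := by
  simp only [eval_add, eval_C]
  exact ContinuousAt.eventually_lt (by fun_prop) continuousAt_const (by simpa using h)

theorem Polynomial.eventually_splits_and_card_roots_toFinset_mul_prod_X_sub_C_add_C {g : ℝ[X]}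
    (hg : g.Splits) (hg0 : g ≠ 0) (S : Finset ℝ) :
    ∀ᶠ η in 𝓝[≠] 0, (g * (∏ b ∈ S, (X - C b) + C η)).Splits ∧
      g.roots.toFinset.card + S.card ≤ (g * (∏ b ∈ S, (X - C b) + C η)).roots.toFinset.card := by
  set h := ∏ b ∈ S, (X - C b)
  obtain ⟨u, hu, hsep⟩ := S.exists_pos_forall_two_mul_lt_abs_sub
  have hsign : ∀ᶠ η in 𝓝[≠] 0, ∀ a ∈ S, (h + C η).eval (a - u) * (h + C η).eval (a + u) < 0 :=
    nhdsWithin_le_nhds <| (Finset.eventually_all S).2 fun a ha =>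
      eventually_eval_add_C_mul_eval_add_C_neg <| eval_prod_X_sub_C_mul_eval_prod_X_sub_C_neg ha hu
        fun b hb hba => by linarith [hsep a ha b hb hba.symm]
  have havoid : ∀ᶠ η in 𝓝[≠] 0, ∀ x ∈ g.roots.toFinset, (h + C η).eval x ≠ 0 :=
    (Finset.eventually_all _).2 fun x _ => eventually_eval_add_C_ne_zero h x
  filter_upwards [hsign, havoid, eventually_eval_add_C_ne_zero h 0] with η hsign havoid hzero
  have hp0 : h + C η ≠ 0 := fun h0 => hzero (by rw [h0, eval_zero])
  have hcard : S.card ≤ (h + C η).roots.toFinset.card :=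
    card_le_card_roots_toFinset_of_sign_changes hu (fun a ha b hb hab => (hsep a ha b hb hab).le)
      hsign
  have hdisj : Disjoint g.roots.toFinset (h + C η).roots.toFinset :=
    Finset.disjoint_left.2 fun x hx hx' =>
      havoid x hx ((mem_roots hp0).1 (Multiset.mem_toFinset.1 hx'))
  rw [roots_mul (mul_ne_zero hg0 hp0), Multiset.toFinset_add, Finset.card_union_of_disjoint hdisj]
  refine ⟨hg.mul (splits_of_natDegree_le_card_roots_toFinset ?_), by omega⟩
  rwa [natDegree_add_C, natDegree_finsetProd_X_sub_C_eq_card]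

theorem Polynomial.Splits.eq_prod_roots_sub_mul_prod_X_sub_C {K : Type*} [Field K]
    [DecidableEq K] {f : K[X]} (hsplit : f.Splits) (hmonic : f.Monic) {S : Finset K}
    (hS : S.val ≤ f.roots) :
    f = ((f.roots - S.val).map (X - C ·)).prod * ∏ b ∈ S, (X - C b) := by
  conv_lhs => rw [hsplit.eq_prod_roots_of_monic hmonic, ← tsub_add_cancel_of_le hS,
    Multiset.map_add, Multiset.prod_add]
  rfl

/-- **Perturbation towards more distinct roots.** Let `f` be a monic hyperbolic polynomial of
degree `n` with exactly `k < n` distinct roots. For each `1 ≤ s ≤ k` there are a monic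
polynomial `g` of degree `n − s` and `δ > 0` such that for all `0 < ε < δ` the polynomials
`f + εg` and `f − εg` are hyperbolic with strictly more than `k` distinct real roots. -/
theorem perturb_to_more_distinct_roots (n k : ℕ) (f : Polynomial ℝ)
    (hmonic : f.Monic) (hdeg : f.natDegree = n) (hsplit : f.Splits)
    (hk : f.roots.toFinset.card = k) (hkn : k < n)
    (s : ℕ) (hs1 : 1 ≤ s) (hs2 : s ≤ k) :
    ∃ g : Polynomial ℝ, g.Monic ∧ g.natDegree = n - s ∧
      ∃ δ > 0, ∀ ε : ℝ, 0 < ε → ε < δ →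
        ((f + Polynomial.C ε * g).Splits ∧
          k < (f + Polynomial.C ε * g).roots.toFinset.card) ∧
        ((f - Polynomial.C ε * g).Splits ∧
          k < (f - Polynomial.C ε * g).roots.toFinset.card) := by
  classical
  have hcard : Multiset.card f.roots = n := by rw [splits_iff_card_roots.1 hsplit, hdeg]
  obtain ⟨r, hr⟩ := Multiset.exists_one_lt_count_of_card_toFinset_lt (hk ▸ hcard ▸ hkn)
  obtain ⟨S, hrS, hST, rfl⟩ := Finset.exists_subsuperset_card_eq
    (Finset.singleton_subset_iff.2 <|
      Multiset.mem_toFinset.2 (Multiset.count_pos.1 (one_pos.trans hr)))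
    (by simpa using hs1) (hk ▸ hs2)
  have hSR : S.val ≤ f.roots :=
    (Multiset.le_iff_subset S.nodup).2 fun x hx => Multiset.mem_toFinset.1 (hST hx)
  set g := ((f.roots - S.val).map (X - C ·)).prod
  have hgroots : g.roots = f.roots - S.val := roots_multiset_prod_X_sub_C _
  have hmore : k < g.roots.toFinset.card + S.card := hk ▸ hgroots ▸
    Multiset.card_toFinset_lt_card_toFinset_sub_add_card (Finset.singleton_subset_iff.1 hrS) hr
  have hgm : g.Monic := monic_multiset_prod_of_monic _ _ fun a _ => monic_X_sub_C a
  have hgsplit : g.Splits := splits_iff_card_roots.2 (by rw [hgroots]; simp [g])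
  obtain ⟨δ, hδ, hball⟩ := Metric.mem_nhdsWithin_iff.1
    (eventually_splits_and_card_roots_toFinset_mul_prod_X_sub_C_add_C hgsplit hgm.ne_zero S)
  have hperturb : ∀ η : ℝ, η ≠ 0 → |η| < δ →
      (f + C η * g).Splits ∧ k < (f + C η * g).roots.toFinset.card := fun η hη hηδ => by
    obtain ⟨hsp, hle⟩ := hball ⟨mem_ball_zero_iff.2 hηδ, hη⟩
    rw [hsplit.eq_prod_roots_sub_mul_prod_X_sub_C hmonic hSR, mul_comm (C η), ← mul_add]
    exact ⟨hsp, hmore.trans_le hle⟩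
  refine ⟨g, hgm, by simp [g, Multiset.card_sub hSR, hcard], δ, hδ, fun ε hε hεδ =>
    ⟨hperturb ε hε.ne' (by rwa [abs_of_pos hε]), ?_⟩⟩
  simpa [sub_eq_add_neg] using
    hperturb (-ε) (neg_ne_zero.2 hε.ne') (by rwa [abs_neg, abs_of_pos hε])
end

section
/- Let f = t^n + a_1 t^{n−1} + ⋯ + a_n ∈ ℝ[t] be a monic hyperbolic polynomial of degree n all of whose roots are nonnegative. If a_{n−i} = 0 for some i with 0 ≤ i ≤ n − 1, then a_{n−j} = 0 for all j with 0 ≤ j ≤ i; equivalently, 0 is a root of f of multiplicity at least i + 1. -/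
/-!
By Vieta, the coefficient of `t^i` is a nonzero multiple of `e_{n-i}` of the roots. For
nonnegative roots, `e_k` is a sum of nonnegative products and is positive as soon as `k` of the
roots are positive. So if `0` had multiplicity at most `i`, at least `n - i` roots would be
positive and the coefficient of `t^i` could not vanish. Since the multiplicity of `0` is the
trailing degree, all lower coefficients vanish as well.
-/

open Polynomial

namespace Multiset

theorem card_filter_pos_add_count_zero {α : Type*} [Zero α] [LinearOrder α] {s : Multiset α}
    (hs : ∀ x ∈ s, 0 ≤ x) : card (s.filter (0 < ·)) + s.count 0 = card s := by
  rw [card_eq_countP_add_countP (0 < ·) s, countP_eq_card_filter, count]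
  congr 1
  refine countP_congr rfl fun x hx => ?_
  simp [(hs x hx).lt_iff_ne]

theorem esymm_pos_of_le_card_filter_pos {R : Type*} [CommSemiring R] [LinearOrder R]
    [IsStrictOrderedRing R] {s : Multiset R} {k : ℕ} (hs : ∀ x ∈ s, 0 ≤ x)
    (hk : k ≤ card (s.filter (0 < ·))) : 0 < s.esymm k := by
  obtain ⟨t, ht⟩ : ∃ t, t ∈ (s.filter (0 < ·)).powersetCard k := by
    refine exists_mem_of_ne_zero (card_pos.mp ?_)
    rw [card_powersetCard]
    exact Nat.choose_pos hk
  rw [mem_powersetCard] at ht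
  have hts : t ≤ s := ht.1.trans (filter_le _ s)
  have hprod_nonneg : ∀ x ∈ (s.powersetCard k).map prod, 0 ≤ x := by
    simp only [mem_map, mem_powersetCard]
    rintro _ ⟨u, ⟨hus, -⟩, rfl⟩
    exact prod_nonneg fun x hx => hs x (mem_of_le hus hx)
  calc 0 < t.prod := prod_pos fun x hx => of_mem_filter (mem_of_le ht.1 hx)
    _ ≤ s.esymm k :=
      single_le_sum hprod_nonneg _ (mem_map_of_mem _ (mem_powersetCard.mpr ⟨hts, ht.2⟩))

end Multiset

namespace Polynomial

theorem Splits.coeff_ne_zero_of_roots_nonneg {F : Type*} [Field F] [LinearOrder F]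
    [IsStrictOrderedRing F] {f : F[X]} (hsplit : f.Splits) (hf : f ≠ 0)
    (hroots : ∀ x ∈ f.roots, 0 ≤ x) {i : ℕ} (hti : f.natTrailingDegree ≤ i)
    (hid : i ≤ f.natDegree) : f.coeff i ≠ 0 := by
  have hcard : Multiset.card f.roots = f.natDegree := splits_iff_card_roots.mp hsplit
  have hzeros : f.roots.count 0 = f.natTrailingDegree := by
    rw [count_roots, rootMultiplicity_eq_natTrailingDegree']
  have hpositive : f.natDegree - i ≤ Multiset.card (f.roots.filter (0 < ·)) := by
    have := Multiset.card_filter_pos_add_count_zero hroots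
    omega
  have hpos := Multiset.esymm_pos_of_le_card_filter_pos hroots hpositive
  rw [coeff_eq_esymm_roots_of_splits hsplit hid]
  exact mul_ne_zero (mul_ne_zero (leadingCoeff_ne_zero.mpr hf) (pow_ne_zero _ (by norm_num)))
    hpos.ne'

end Polynomial

theorem nonneg_roots_vanishing_coeffs_general (n : ℕ) (f : Polynomial ℝ)
    (hdeg : f.natDegree = n) (hsplit : (f.map (RingHom.id ℝ)).Splits)
    (hroots : ∀ x ∈ f.roots, 0 ≤ x)
    (i : ℕ) (hi : i + 1 ≤ n) (h : f.coeff i = 0) :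
    (∀ j ≤ i, f.coeff j = 0) ∧ i + 1 ≤ Polynomial.rootMultiplicity 0 f := by
  rw [map_id] at hsplit
  have hf : f ≠ 0 := by
    rintro rfl
    rw [natDegree_zero] at hdeg
    omega
  have hlt : i < f.natTrailingDegree := lt_of_not_ge fun hle =>
    hsplit.coeff_ne_zero_of_roots_nonneg hf hroots hle (by omega) h
  rw [rootMultiplicity_eq_natTrailingDegree']
  exact ⟨fun j hj => coeff_eq_zero_of_lt_natTrailingDegree (by omega), hlt⟩

/-- Let `f = t^n + a_1 t^{n−1} + ⋯ + a_n` be a monic hyperbolic polynomial all of whose roots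
are nonnegative (here `a_{n−i}` is the coefficient of `t^i`). If `a_{n−i} = 0` for some
`0 ≤ i ≤ n − 1`, then `a_{n−j} = 0` for all `0 ≤ j ≤ i`; equivalently `0` is a root of `f`
of multiplicity at least `i + 1`. -/
theorem nonneg_roots_vanishing_coeffs (n : ℕ) (f : Polynomial ℝ)
    (hmonic : f.Monic) (hdeg : f.natDegree = n) (hsplit : (f.map (RingHom.id ℝ)).Splits)
    (hroots : ∀ x ∈ f.roots, 0 ≤ x)
    (i : ℕ) (hi : i + 1 ≤ n) (h : f.coeff i = 0) :
    (∀ j ≤ i, f.coeff j = 0) ∧ i + 1 ≤ Polynomial.rootMultiplicity 0 f :=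
  nonneg_roots_vanishing_coeffs_general n f hdeg hsplit hroots i hi h
end

section
/- For every n ≥ 1, every s with 2 ≤ s ≤ n, and all fixed a_1,…,a_s ∈ ℝ, the set H_s(a_1,…,a_s) := {z ∈ ℝⁿ : z_1 = a_1, …, z_s = a_s, and the polynomial t^n − z_1 t^{n−1} + z_2 t^{n−2} − ⋯ + (−1)^n z_n is hyperbolic} is a compact subset of ℝⁿ. -/
/-!
By Vieta, a monic real polynomial of degree `n` is hyperbolic exactly when its coefficient
vector is the image of its vector of roots `r ∈ ℝⁿ` under the continuous map of elementary
symmetric functions. Hence `H_s(a)` is the image of the closed set of root vectors with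
`e_k(r) = a_k` for `k ≤ s`. That set is bounded because `∑ rᵢ² = e₁(r)² - 2 e₂(r) = a₁² - 2 a₂`,
so it is compact, and so is its image.
-/

/-- The monic polynomial `t^n − z_1 t^{n−1} + z_2 t^{n−2} − ⋯ + (−1)^n z_n` associated to
`z ∈ ℝⁿ` (the coordinate `z i` playing the role of `z_{i+1}` for `i : Fin n`). -/
noncomputable def polyOfCoeffs (n : ℕ) (z : Fin n → ℝ) : Polynomial ℝ :=
  Polynomial.X ^ n +
    ∑ i : Fin n, Polynomial.C ((-1) ^ ((i : ℕ) + 1) * z i) * Polynomial.X ^ (n - ((i : ℕ) + 1))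

open Polynomial Finset

theorem MvPolynomial.psum_two (σ R : Type*) [CommRing R] [Fintype σ] :
    psum σ R 2 = esymm σ R 1 ^ 2 - 2 * esymm σ R 2 := by
  have h : {a ∈ antidiagonal 2 | a.1 ∈ Set.Ioo 0 2} = {(1, 1)} := by decide
  rw [psum_eq_mul_esymm_sub_sum σ R 2 two_pos, h, sum_singleton, psum_one, esymm_one]
  ring

lemma Multiset.exists_map_fin_eq {α : Type*} {n : ℕ} (m : Multiset α) (hm : card m = n) :
    ∃ r : Fin n → α, univ.val.map r = m := by
  have hl : m.toList.length = n := by simp [hm]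
  refine ⟨fun i => m.toList.get (i.cast hl.symm), ?_⟩
  rw [Fin.univ_val_map, ← List.ofFn_congr hl m.toList.get, List.ofFn_get, Multiset.coe_toList]

lemma isBounded_setOf_sum_sq_le_s17 {ι : Type*} [Fintype ι] (c : ℝ) :
    Bornology.IsBounded {r : ι → ℝ | ∑ i, r i ^ 2 ≤ c} := by
  refine (Metric.isBounded_closedBall (x := 0) (r := √c)).subset fun r hr => ?_
  rw [mem_closedBall_zero_iff, pi_norm_le_iff_of_nonneg (Real.sqrt_nonneg c)]
  exact fun i => Real.abs_le_sqrt <|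
    (single_le_sum (fun j _ => sq_nonneg (r j)) (mem_univ i)).trans hr

-- `elemSymm n r i` is `e_{i+1}(r)`: indices are shifted by one, as in `polyOfCoeffs`.
noncomputable def elemSymm {R : Type*} [CommSemiring R] (n : ℕ) (r : Fin n → R) : Fin n → R :=
  fun i => MvPolynomial.eval r (MvPolynomial.esymm (Fin n) R (i + 1))

lemma elemSymm_eq_esymm {R : Type*} [CommSemiring R] (n : ℕ) (r : Fin n → R) (i : Fin n) :
    elemSymm n r i = (univ.val.map r).esymm (i + 1) :=
  MvPolynomial.aeval_esymm_eq_multiset_esymm (Fin n) R _ r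

lemma continuous_elemSymm {R : Type*} [CommSemiring R] [TopologicalSpace R]
    [IsTopologicalSemiring R] (n : ℕ) : Continuous (elemSymm (R := R) n) :=
  continuous_pi fun _ => MvPolynomial.continuous_eval _

lemma sum_sq_eq_elemSymm {R : Type*} [CommRing R] {n : ℕ} (h : 1 < n) (r : Fin n → R) :
    ∑ i, r i ^ 2 = elemSymm n r ⟨0, by omega⟩ ^ 2 - 2 * elemSymm n r ⟨1, h⟩ := by
  simpa [elemSymm, MvPolynomial.psum] using
    congrArg (MvPolynomial.eval r) (MvPolynomial.psum_two (Fin n) R)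

lemma coeff_polyOfCoeffs_sub_succ (n : ℕ) (z : Fin n → ℝ) (i : Fin n) :
    (polyOfCoeffs n z).coeff (n - (i + 1)) = (-1) ^ ((i : ℕ) + 1) * z i := by
  have hi := i.isLt
  rw [polyOfCoeffs, coeff_add, coeff_X_pow, if_neg (by omega), zero_add, finsetSum_coeff,
    sum_eq_single i (fun j _ hj => ?_) (by simp), coeff_C_mul_X_pow, if_pos rfl]
  rw [coeff_C_mul_X_pow, if_neg fun h => hj (Fin.ext (by omega))]

lemma polyOfCoeffs_injective (n : ℕ) : Function.Injective (polyOfCoeffs n) := fun z z' h =>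
  funext fun i => by
    simpa [coeff_polyOfCoeffs_sub_succ] using congrArg (coeff · (n - (i + 1))) h

lemma degree_polyOfCoeffs_sub_X_pow_lt (n : ℕ) (z : Fin n → ℝ) :
    (polyOfCoeffs n z - X ^ n).degree < (n : WithBot ℕ) := by
  rw [polyOfCoeffs, add_sub_cancel_left]
  exact (degree_sum_le _ _).trans_lt <| (Finset.sup_lt_iff (WithBot.bot_lt_coe n)).2 fun i _ =>
    (degree_C_mul_X_pow_le _ _).trans_lt <| Nat.cast_lt.2 (by have := i.isLt; omega)

lemma monic_polyOfCoeffs (n : ℕ) (z : Fin n → ℝ) : (polyOfCoeffs n z).Monic := by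
  simpa using monic_X_pow_add (degree_polyOfCoeffs_sub_X_pow_lt n z)

lemma natDegree_polyOfCoeffs (n : ℕ) (z : Fin n → ℝ) : (polyOfCoeffs n z).natDegree = n := by
  rw [← add_sub_cancel (X ^ n) (polyOfCoeffs n z), natDegree_add_eq_left_of_degree_lt,
    natDegree_X_pow]
  rw [degree_X_pow]
  exact degree_polyOfCoeffs_sub_X_pow_lt n z

lemma polyOfCoeffs_elemSymm (n : ℕ) (r : Fin n → ℝ) :
    polyOfCoeffs n (elemSymm n r) = ∏ j, (X - C (r j)) := by
  have hcard : Multiset.card (univ.val.map r) = n := by simp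
  have hprod : ∏ j, (X - C (r j)) = ((univ.val.map r).map fun t => X - C t).prod := by
    rw [Multiset.map_map]; rfl
  rw [hprod, Multiset.prod_X_sub_X_eq_sum_esymm, hcard, sum_range_succ',
    ← Fin.sum_univ_eq_sum_range, polyOfCoeffs, add_comm (X ^ n)]
  simp [elemSymm_eq_esymm, mul_assoc, Multiset.esymm]

lemma splits_polyOfCoeffs_iff (n : ℕ) (z : Fin n → ℝ) :
    (polyOfCoeffs n z).Splits ↔ z ∈ Set.range (elemSymm n) := by
  constructor
  · intro hz
    obtain ⟨r, hr⟩ := (polyOfCoeffs n z).roots.exists_map_fin_eq (n := n) <| by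
      rw [splits_iff_card_roots.mp hz, natDegree_polyOfCoeffs]
    refine ⟨r, polyOfCoeffs_injective n ?_⟩
    rw [polyOfCoeffs_elemSymm, hz.eq_prod_roots_of_monic (monic_polyOfCoeffs n z), ← hr,
      Multiset.map_map]
    rfl
  · rintro ⟨r, rfl⟩
    rw [polyOfCoeffs_elemSymm]
    exact Splits.prod fun j _ => Splits.X_sub_C _

lemma setOf_and_splits_polyOfCoeffs_eq_image (n : ℕ) (P : (Fin n → ℝ) → Prop) :
    {z | P z ∧ (polyOfCoeffs n z).Splits} = elemSymm n '' {r | P (elemSymm n r)} := by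
  ext z
  simp only [Set.mem_ofPred_eq, splits_polyOfCoeffs_iff, Set.mem_image, Set.mem_range]
  constructor
  · rintro ⟨hz, r, rfl⟩
    exact ⟨r, hz, rfl⟩
  · rintro ⟨r, hr, rfl⟩
    exact ⟨hr, r, rfl⟩

theorem Hs_isCompact_general (n s : ℕ) (hs2 : 2 ≤ s) (hsn : s ≤ n)
    (a : Fin n → ℝ) :
    IsCompact {z : Fin n → ℝ | (∀ i : Fin n, (i : ℕ) < s → z i = a i) ∧
      (polyOfCoeffs n z).Splits} := by
  rw [setOf_and_splits_polyOfCoeffs_eq_image]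
  refine (Metric.isCompact_of_isClosed_isBounded ?_ ?_).image (continuous_elemSymm n)
  · simp only [Set.ofPred_forall]
    exact isClosed_iInter fun i => isClosed_iInter fun _ =>
      isClosed_eq ((continuous_apply i).comp (continuous_elemSymm n)) continuous_const
  · have hn : 1 < n := by omega
    refine (isBounded_setOf_sum_sq_le_s17 (a ⟨0, by omega⟩ ^ 2 - 2 * a ⟨1, hn⟩)).subset fun r hr => ?_
    rw [Set.mem_ofPred_eq, sum_sq_eq_elemSymm hn, hr _ (show 0 < s by omega),
      hr _ (show 1 < s by omega)]

/-- For `2 ≤ s ≤ n` and fixed `a_1, …, a_s`, the set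
`H_s(a_1,…,a_s) = {z ∈ ℝⁿ : z_1 = a_1, …, z_s = a_s, f_z hyperbolic}` is compact. -/
theorem Hs_isCompact (n s : ℕ) (hn : 1 ≤ n) (hs2 : 2 ≤ s) (hsn : s ≤ n)
    (a : Fin n → ℝ) :
    IsCompact {z : Fin n → ℝ | (∀ i : Fin n, (i : ℕ) < s → z i = a i) ∧
      (polyOfCoeffs n z).Splits} :=
  Hs_isCompact_general n s hs2 hsn a
end

section
/- Let n ≥ 1, let s satisfy 2 ≤ s ≤ n, and let f ∈ ℝ[t] be any monic hyperbolic polynomial of degree n. Then there exists a monic hyperbolic polynomial g ∈ ℝ[t] of degree n that agrees with f in the coefficients of t^{n−1}, t^{n−2}, …, t^{n−s} and has at most s distinct real roots. Equivalently, every nonempty set H_s(a_1,…,a_s) with s ≥ 2 contains a point z such that f_z has at most s distinct roots. -/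
/-!
Write `p_j` for the `j`-th power sum of the roots. By Newton's identities the coefficients of
`t^{n-1}, …, t^{n-s}` of a monic hyperbolic polynomial are determined by `p_1, …, p_s` of its
roots `x ∈ ℝⁿ`. The fibre `{y | p_j y = p_j x, 1 ≤ j ≤ s}` is compact since `p_2 y = ∑ yᵢ²`, so
`p_{s+1}` attains its minimum on it at some `y`. If `y` had more than `s` distinct coordinates,
the Jacobian of `(p_1, …, p_{s+1})` at `y` would contain an invertible Vandermonde minor; by the
inverse function theorem this map is then open at `y`, and `p_{s+1}` could be lowered inside
the fibre. So the polynomial with roots `y` has at most `s` distinct roots.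
-/

open Finset Polynomial Filter Topology Function Matrix

theorem Matrix.mulVec_surjective_of_submatrix {l m n R : Type*} [Fintype l] [Fintype n]
    [DecidableEq n] [Semiring R] {A : Matrix m n R} (e : l → n)
    (h : Surjective (A.submatrix id e).mulVec) : Surjective A.mulVec := by
  intro w
  obtain ⟨c, rfl⟩ := h w
  refine ⟨(1 : Matrix n n R).submatrix id e *ᵥ c, ?_⟩
  rw [mulVec_mulVec]
  congr
  ext
  simp [mul_apply, one_apply]

theorem exists_injective_comp_of_le_card_image {ι α : Type*} [Fintype ι] [DecidableEq α]
    {y : ι → α} {k : ℕ} (hk : k ≤ #(univ.image y)) : ∃ e : Fin k → ι, Injective (y ∘ e) := by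
  classical
  have hcard : Fintype.card (Fin k) ≤ Fintype.card (Set.range y) := by
    rwa [Fintype.card_fin, ← Set.toFinset_card, Set.toFinset_range]
  obtain ⟨φ⟩ := Function.Embedding.nonempty_of_card_le hcard
  refine ⟨Set.rangeSplitting y ∘ φ, fun a b hab => φ.injective (Subtype.ext ?_)⟩
  simpa only [Function.comp_apply, Set.apply_rangeSplitting] using hab

section PowerSums

variable {ι : Type*} [Fintype ι]

def powerSum {R : Type*} [CommSemiring R] (j : ℕ) (x : ι → R) : R := ∑ i, x i ^ j

theorem aeval_psum_eq_powerSum {R : Type*} [CommRing R] (j : ℕ) (x : ι → R) :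
    MvPolynomial.aeval x (MvPolynomial.psum ι R j) = powerSum j x := by
  simp [MvPolynomial.psum, powerSum]

theorem esymm_eq_of_powerSum_eq {R : Type*} [CommRing R] [IsDomain R] [CharZero R] {s : ℕ}
    {x y : ι → R} (h : ∀ j, 1 ≤ j → j ≤ s → powerSum j x = powerSum j y) :
    ∀ k ≤ s, (univ.val.map x).esymm k = (univ.val.map y).esymm k := by
  intro k
  induction k using Nat.strong_induction_on with
  | _ k ih =>
  intro hks
  rcases Nat.eq_zero_or_pos k with rfl | hk
  · simp [Multiset.esymm]
  have newton (z : ι → R) : (k : R) * (univ.val.map z).esymm k = (-1) ^ (k + 1) *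
      ∑ a ∈ antidiagonal k with a.1 < k, (-1) ^ a.1 * (univ.val.map z).esymm a.1 * powerSum a.2 z := by
    simpa only [map_mul, map_natCast, map_pow, map_neg, map_one, map_sum, aeval_psum_eq_powerSum,
      MvPolynomial.aeval_esymm_eq_multiset_esymm] using
      congrArg (MvPolynomial.aeval z) (MvPolynomial.mul_esymm_eq_sum ι R k)
  refine mul_left_cancel₀ (Nat.cast_ne_zero.mpr hk.ne') ?_
  rw [newton x, newton y]
  congr 1
  refine sum_congr rfl fun a ha => ?_
  rw [mem_filter, HasAntidiagonal.mem_antidiagonal] at ha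
  rw [ih a.1 ha.2 (by omega), h a.2 (by omega) (by omega)]

theorem continuous_powerSum (j : ℕ) : Continuous (powerSum j : (ι → ℝ) → ℝ) :=
  continuous_finsetSum _ fun i _ => (continuous_apply i).pow j

theorem isCompact_setOf_powerSum_eq {s : ℕ} (hs : 2 ≤ s) (x : ι → ℝ) :
    IsCompact {y : ι → ℝ | ∀ j, 1 ≤ j → j ≤ s → powerSum j y = powerSum j x} := by
  refine Metric.isCompact_of_isClosed_isBounded ?_ ?_
  · simp only [Set.ofPred_forall]
    exact isClosed_iInter fun j => isClosed_iInter fun _ => isClosed_iInter fun _ =>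
      isClosed_eq (continuous_powerSum j) continuous_const
  · refine (Metric.isBounded_iff_subset_closedBall 0).2 ⟨√(powerSum 2 x), fun y hy => ?_⟩
    rw [mem_closedBall_zero_iff, pi_norm_le_iff_of_nonneg (Real.sqrt_nonneg _)]
    intro i
    refine Real.abs_le_sqrt ?_
    rw [← hy 2 one_le_two hs]
    exact single_le_sum (f := fun i => y i ^ 2) (fun i _ => sq_nonneg (y i)) (mem_univ i)

-- `p_0` is constant, so the map starts at `p_1`.
def powerSums (k : ℕ) (y : ι → ℝ) : Fin k → ℝ := fun j => powerSum (j + 1) y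

def powerSumsJacobian (k : ℕ) (y : ι → ℝ) : Matrix (Fin k) ι ℝ :=
  Matrix.of fun j i => (j + 1 : ℕ) * y i ^ (j : ℕ)

theorem hasStrictFDerivAt_powerSums (k : ℕ) (y : ι → ℝ) :
    HasStrictFDerivAt (powerSums k) (powerSumsJacobian k y).mulVecLin.toContinuousLinearMap y := by
  rw [hasStrictFDerivAt_pi']
  intro j
  have := HasStrictFDerivAt.fun_sum (u := univ) fun i _ =>
    (hasStrictDerivAt_pow (j + 1 : ℕ) (y i)).comp_hasStrictFDerivAt y
      (hasStrictFDerivAt_apply (𝕜 := ℝ) i y)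
  refine this.congr_fderiv ?_
  ext1 h
  simp [powerSumsJacobian, mulVec, dotProduct, mul_comm]

theorem powerSumsJacobian_mulVec_surjective {k : ℕ} {y : ι → ℝ} (hk : k ≤ #(univ.image y)) :
    Surjective (powerSumsJacobian k y).mulVec := by
  classical
  obtain ⟨e, he⟩ := exists_injective_comp_of_le_card_image hk
  refine mulVec_surjective_of_submatrix e (mulVec_surjective_iff_isUnit.2 ?_)
  have hfactor : (powerSumsJacobian k y).submatrix id e =
      diagonal (fun j : Fin k => ((j + 1 : ℕ) : ℝ)) * (vandermonde (y ∘ e))ᵀ := by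
    ext j c
    simp [powerSumsJacobian, vandermonde, diagonal_mul]
  rw [hfactor, isUnit_iff_isUnit_det, det_mul, det_diagonal, det_transpose]
  exact (IsUnit.mk0 _ (prod_ne_zero_iff.2 fun j _ => by positivity)).mul
    (IsUnit.mk0 _ (det_vandermonde_ne_zero_iff.2 he))

theorem exists_powerSum_lt_of_lt_card_image {s : ℕ} {y : ι → ℝ} (hs : s < #(univ.image y)) :
    ∃ y' : ι → ℝ, (∀ j, 1 ≤ j → j ≤ s → powerSum j y' = powerSum j y) ∧
      powerSum (s + 1) y' < powerSum (s + 1) y := by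
  have hopen : Set.range (powerSums (ι := ι) (s + 1)) ∈ 𝓝 (powerSums (s + 1) y) := by
    rw [← (hasStrictFDerivAt_powerSums (s + 1) y).map_nhds_eq_of_surj
      (LinearMap.range_eq_top.2 (powerSumsJacobian_mulVec_surjective hs))]
    exact range_mem_map
  set target : ℝ → Fin (s + 1) → ℝ := fun t => powerSums (s + 1) y - t • Pi.single (Fin.last s) 1
  have htarget : Tendsto target (𝓝[>] 0) (𝓝 (powerSums (s + 1) y)) := by
    have : Continuous target := by fun_prop
    simpa [target] using (this.tendsto 0).mono_left nhdsWithin_le_nhds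
  obtain ⟨t, ⟨y', hy'⟩, ht⟩ := ((htarget.eventually hopen).and self_mem_nhdsWithin).exists
  refine ⟨y', fun j hj1 hjs => ?_, ?_⟩
  · have := congr_fun hy' ⟨j - 1, by omega⟩
    simp only [powerSums, target, Pi.sub_apply, Pi.smul_apply, Pi.single_apply, Fin.ext_iff,
      Fin.val_last, smul_eq_mul, mul_ite, mul_one, mul_zero] at this
    rwa [if_neg (by omega), sub_zero, Nat.sub_add_cancel hj1] at this
  · have := congr_fun hy' (Fin.last s)
    simp only [powerSums, target, Pi.sub_apply, Pi.smul_apply, Pi.single_eq_same, smul_eq_mul,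
      mul_one, Fin.val_last] at this
    linarith

theorem exists_powerSum_eq_card_image_le {s : ℕ} (hs : 2 ≤ s) (x : ι → ℝ) :
    ∃ y : ι → ℝ, (∀ j, 1 ≤ j → j ≤ s → powerSum j y = powerSum j x) ∧ #(univ.image y) ≤ s := by
  obtain ⟨y, hy, hmin⟩ := (isCompact_setOf_powerSum_eq hs x).exists_isMinOn
    ⟨x, fun _ _ _ => rfl⟩ (continuous_powerSum (s + 1)).continuousOn
  refine ⟨y, hy, not_lt.1 fun hlt => ?_⟩
  obtain ⟨y', hy'y, hlt'⟩ := exists_powerSum_lt_of_lt_card_image hlt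
  exact hlt'.not_ge (hmin fun j h1 h2 => (hy'y j h1 h2).trans (hy j h1 h2))

end PowerSums

theorem Polynomial.coeff_natDegree_sub_eq_of_esymm_roots_eq {K : Type*} [Field K] {f g : K[X]}
    (hf : f.Monic) (hg : g.Monic) (hfs : f.Splits) (hgs : g.Splits)
    (hdeg : f.natDegree = g.natDegree) {s : ℕ} (h : ∀ k ≤ s, f.roots.esymm k = g.roots.esymm k)
    {i : ℕ} (hi : i ≤ s) : f.coeff (f.natDegree - i) = g.coeff (g.natDegree - i) := by
  rw [coeff_eq_esymm_roots_of_splits hfs (Nat.sub_le _ _),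
    coeff_eq_esymm_roots_of_splits hgs (Nat.sub_le _ _), hf.leadingCoeff, hg.leadingCoeff, hdeg,
    h _ (by omega)]

theorem exists_hyperbolic_few_distinct_roots_general (n s : ℕ) (hs2 : 2 ≤ s)
    (f : Polynomial ℝ) (hmonic : f.Monic) (hdeg : f.natDegree = n)
    (hsplit : (f.map (RingHom.id ℝ)).Splits) :
    ∃ g : Polynomial ℝ, g.Monic ∧ g.natDegree = n ∧ (g.map (RingHom.id ℝ)).Splits ∧
      (∀ i, 1 ≤ i → i ≤ s → g.coeff (n - i) = f.coeff (n - i)) ∧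
      g.roots.toFinset.card ≤ s := by
  rw [Polynomial.map_id] at hsplit
  obtain ⟨y, hpow, hcard⟩ := exists_powerSum_eq_card_image_le hs2 (fun r : f.roots => (r : ℝ))
  set R := univ.val.map y
  have hR : Multiset.card R = n := by
    rw [Multiset.card_map, card_val, card_univ, Multiset.card_coe, ← hdeg,
      hsplit.natDegree_eq_card_roots]
  set g := (R.map (X - C ·)).prod
  have hg : g.Monic := monic_multiset_prod_of_monic _ _ fun a _ => monic_X_sub_C a
  have hgdeg : g.natDegree = n := by rw [natDegree_multiset_prod_X_sub_C_eq_card, hR]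
  have hgroots : g.roots = R := roots_multiset_prod_X_sub_C R
  have hgs : g.Splits := splits_iff_card_roots.2 (by rw [hgroots, hgdeg, hR])
  refine ⟨g, hg, hgdeg, by rwa [Polynomial.map_id], fun i _ hi => ?_, by rwa [hgroots]⟩
  have hesymm : ∀ k ≤ s, g.roots.esymm k = f.roots.esymm k := fun k hk => by
    rw [hgroots, esymm_eq_of_powerSum_eq hpow k hk, Multiset.map_univ_coe]
  simpa only [hgdeg, hdeg] using
    coeff_natDegree_sub_eq_of_esymm_roots_eq hg hmonic hgs hsplit (hgdeg.trans hdeg.symm) hesymm hi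

/-- For `2 ≤ s ≤ n`, every monic hyperbolic polynomial `f` of degree `n` can be replaced by a
monic hyperbolic polynomial `g` of degree `n` agreeing with `f` in the coefficients of
`t^{n−1}, …, t^{n−s}` and having at most `s` distinct real roots. (Equivalently, every
nonempty set `H_s(a_1,…,a_s)` with `s ≥ 2` contains a point `z` such that `f_z` has at most
`s` distinct roots.) -/
theorem exists_hyperbolic_few_distinct_roots (n s : ℕ) (hn : 1 ≤ n) (hs2 : 2 ≤ s)
    (hsn : s ≤ n) (f : Polynomial ℝ) (hmonic : f.Monic) (hdeg : f.natDegree = n)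
    (hsplit : (f.map (RingHom.id ℝ)).Splits) :
    ∃ g : Polynomial ℝ, g.Monic ∧ g.natDegree = n ∧ (g.map (RingHom.id ℝ)).Splits ∧
      (∀ i, 1 ≤ i → i ≤ s → g.coeff (n - i) = f.coeff (n - i)) ∧
      g.roots.toFinset.card ≤ s :=
  exists_hyperbolic_few_distinct_roots_general n s hs2 f hmonic hdeg hsplit
end
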